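/- arXiv:2601.09094 — 4 statements merged into one kernel-verified Lean document; each statement's English description precedes it below -/
import Mathlib

section
/- Let $\gamma\in(0,\infty)$, $n=1$, $p=q=1$. Suppose there exists a constant $C>0$ such that for every $s\in(0,1)$ and every $f\in\dot{W}^{1,1}(\mathbb{R})$, $(1-s)^\gamma\int_{\mathbb{R}}\int_{|h|\le 1}\frac{|f(x+h)-f(x)|}{|h|^{1+s}}\,dh\,dx\le C\,\|f'\|_{L^1(\mathbb{R})}$. Then $\gamma\ge 1$. -/
open MeasureTheory Real Set
open scoped Classical ENNReal

noncomputable section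

namespace Paper

variable {n : ℕ}

/-- The `k`-th order difference `Δ_h^k f (x)`. -/
def kdiff (k : ℕ) (f : EuclideanSpace ℝ (Fin n) → ℝ)
    (h x : EuclideanSpace ℝ (Fin n)) : ℝ :=
  ∑ j ∈ Finset.range (k + 1), (-1 : ℝ) ^ (k - j) * (k.choose j : ℝ) * f (x + j • h)

/-- Axis-parallel cubes. -/
def IsCube (Q : Set (EuclideanSpace ℝ (Fin n))) : Prop :=
  ∃ (a : EuclideanSpace ℝ (Fin n)) (l : ℝ), 0 < l ∧
    Q = {x | ∀ i, x i ∈ Set.Ico (a i) (a i + l)}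

/-- `ω` satisfies the `A₁` condition with constant `C`. -/
def MemA1 (ω : EuclideanSpace ℝ (Fin n) → ℝ) (C : ℝ) : Prop :=
  ∀ Q : Set (EuclideanSpace ℝ (Fin n)), IsCube Q →
    ∀ᵐ y ∂(volume.restrict Q), (⨍ x in Q, ω x) ≤ C * ω y

/-- `ω` satisfies the `A_p` condition (`p > 1`) with constant `C`. -/
def MemApGt (p : ℝ) (ω : EuclideanSpace ℝ (Fin n) → ℝ) (C : ℝ) : Prop :=
  ∀ Q : Set (EuclideanSpace ℝ (Fin n)), IsCube Q →
    IntegrableOn (fun x => ω x ^ (-1 / (p - 1))) Q volume ∧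
    (⨍ x in Q, ω x) * (⨍ x in Q, ω x ^ (-1 / (p - 1))) ^ (p - 1) ≤ C

/-- `A_p` condition for `p ∈ [1, ∞)`. -/
def MemAp (p : ℝ) (ω : EuclideanSpace ℝ (Fin n) → ℝ) (C : ℝ) : Prop :=
  if p = 1 then MemA1 ω C else MemApGt p ω C

/-- The Muckenhoupt constant `[ω]_{A_p}`. -/
def ApConst (p : ℝ) (ω : EuclideanSpace ℝ (Fin n) → ℝ) : ℝ :=
  sInf {C : ℝ | 0 ≤ C ∧ MemAp p ω C}

/-- `ω ∈ A_p`: nonnegative, locally integrable, satisfying the `A_p` condition. -/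
def IsAp (p : ℝ) (ω : EuclideanSpace ℝ (Fin n) → ℝ) : Prop :=
  (∀ x, 0 ≤ ω x) ∧ LocallyIntegrable ω volume ∧ ∃ C : ℝ, MemAp p ω C

/-- The `A₁` constant. -/
abbrev A1const (ω : EuclideanSpace ℝ (Fin n) → ℝ) : ℝ := ApConst 1 ω

/-- `ω ∈ A₁`. -/
abbrev IsA1 (ω : EuclideanSpace ℝ (Fin n) → ℝ) : Prop := IsAp 1 ω

/-- The critical exponent `p_ω := inf {r ∈ [1,∞) : ω ∈ A_r}`. -/
def pExp (ω : EuclideanSpace ℝ (Fin n) → ℝ) : ℝ :=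
  sInf {r : ℝ | 1 ≤ r ∧ IsAp r ω}

/-- Classical partial derivative in the `i`-th coordinate direction. -/
def pd (i : Fin n) (φ : EuclideanSpace ℝ (Fin n) → ℝ) :
    EuclideanSpace ℝ (Fin n) → ℝ :=
  fun x => fderiv ℝ φ x (EuclideanSpace.single i 1)

/-- The classical partial derivative `∂^α φ` for a multi-index `α`. -/
def pdMulti (α : Fin n → ℕ) (φ : EuclideanSpace ℝ (Fin n) → ℝ) :
    EuclideanSpace ℝ (Fin n) → ℝ :=
  (List.finRange n).foldr (fun i ψ => (pd i)^[α i] ψ) φ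

/-- `g` is the weak `α`-th partial derivative of `f`. -/
def HasWeakPD (α : Fin n → ℕ) (f g : EuclideanSpace ℝ (Fin n) → ℝ) : Prop :=
  ∀ φ : EuclideanSpace ℝ (Fin n) → ℝ, ContDiff ℝ (⊤ : ℕ∞) φ → HasCompactSupport φ →
    ∫ x, f x * pdMulti α φ x = (-1 : ℝ) ^ (∑ i, α i) * ∫ x, g x * φ x

/-- The multi-indices of order exactly `k`. -/
def multiIdx (n k : ℕ) : Finset (Fin n → ℕ) :=
  ((Finset.univ : Finset (Fin n → Fin (k + 1))).image fun a i => (a i : ℕ)).filter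
    fun α => ∑ i, α i = k

/-- The multi-indices of order at most `k`. -/
def multiIdxLE (n k : ℕ) : Finset (Fin n → ℕ) :=
  ((Finset.univ : Finset (Fin n → Fin (k + 1))).image fun a i => (a i : ℕ)).filter
    fun α => ∑ i, α i ≤ k

/-- `|∇^k f|` built from a family `g` of the `k`-th order (weak) partial derivatives. -/
def gradNorm (n k : ℕ) (g : (Fin n → ℕ) → EuclideanSpace ℝ (Fin n) → ℝ)
    (x : EuclideanSpace ℝ (Fin n)) : ℝ :=
  Real.sqrt (∑ α ∈ multiIdx n k, g α x ^ 2)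

end Paper

open Paper

/-! Test the inequality on the tent function `tent = max 0 (min x (2 - x))`, whose weak derivative
`tentDeriv` has `L¹` norm `2`. Near `0` the tent is the identity, so for `x ∈ (0, 1/2)` the inner
integral is at least `∫₀^{1/2} h^{-s} dh ≥ 1 / (2 (1 - s))`, and the double integral is at least
`1 / (4 (1 - s))`. Hence `(1 - s)^(γ - 1) ≤ 8 C` for every `s ∈ (0, 1)`, which is impossible as
`s → 1` unless `γ ≥ 1`. -/

namespace BBMSharpness

open Filter Topology
open scoped NNReal

theorem intervalIntegrable_abs_rpow {r : ℝ} (hr : -1 < r) (a b : ℝ) :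
    IntervalIntegrable (fun x => |x| ^ r) volume a b := by
  have from_zero : ∀ c, 0 ≤ c → IntervalIntegrable (fun x => |x| ^ r) volume 0 c := by
    intro c hc
    have hpow := intervalIntegral.intervalIntegrable_rpow' (a := 0) (b := c) hr
    rw [intervalIntegrable_iff, uIoc_of_le hc] at hpow ⊢
    exact hpow.congr_fun (fun x hx => by simp [abs_of_pos hx.1]) measurableSet_Ioc
  have from_zero' : ∀ c, IntervalIntegrable (fun x => |x| ^ r) volume 0 c := by
    intro c
    rcases le_total 0 c with hc | hc
    · exact from_zero c hc
    · rw [IntervalIntegrable.iff_comp_neg]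
      simpa using from_zero (-c) (by linarith)
  exact (from_zero' a).symm.trans (from_zero' b)

theorem integral_mul_deriv_eq_neg_of_hasDerivAt_off_countable {u u' φ : ℝ → ℝ} {a b : ℝ}
    {S : Set ℝ} (hab : a ≤ b) (hS : S.Countable) (hu : Continuous u)
    (hu_zero : ∀ x ∉ Ioo a b, u x = 0) (hu'_zero : ∀ x ∉ Icc a b, u' x = 0)
    (hderiv : ∀ x ∈ Ioo a b \ S, HasDerivAt u (u' x) x) (hu' : IntervalIntegrable u' volume a b)
    (hφ : ContDiff ℝ 1 φ) :
    ∫ x, u x * deriv φ x = -∫ x, u' x * φ x := by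
  have hφ' : Continuous (deriv φ) := hφ.continuous_deriv le_rfl
  have on_Icc : ∀ v : ℝ → ℝ, (∀ x ∉ Icc a b, v x = 0) → ∫ x, v x = ∫ x in a..b, v x := by
    intro v hv
    rw [intervalIntegral.integral_of_le hab, ← integral_Icc_eq_integral_Ioc,
      setIntegral_eq_integral_of_forall_compl_eq_zero hv]
  have hi₁ : IntervalIntegrable (fun x => u' x * φ x) volume a b :=
    hu'.mul_continuousOn hφ.continuous.continuousOn
  have hi₂ : IntervalIntegrable (fun x => u x * deriv φ x) volume a b :=
    (hu.mul hφ').intervalIntegrable a b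
  have ftc : ∫ x in a..b, (u' x * φ x + u x * deriv φ x) = u b * φ b - u a * φ a :=
    integral_eq_of_hasDerivAt_off_countable_of_le (fun x => u x * φ x) _ hab hS
      (hu.mul hφ.continuous).continuousOn
      (fun x hx => (hderiv x hx).mul (hφ.differentiable_one x).hasDerivAt) (hi₁.add hi₂)
  rw [intervalIntegral.integral_add hi₁ hi₂, hu_zero a (by simp), hu_zero b (by simp)] at ftc
  rw [on_Icc _ (fun x hx => by simp [hu_zero x (fun h => hx (Ioo_subset_Icc_self h))]),
    on_Icc _ (fun x hx => by simp [hu'_zero x hx])]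
  linarith

def tent (x : ℝ) : ℝ := max 0 (min x (2 - x))

def tentDeriv (x : ℝ) : ℝ := (Ioc (0 : ℝ) 1).indicator 1 x - (Ioc (1 : ℝ) 2).indicator 1 x

theorem lipschitzWith_one_tent : LipschitzWith 1 tent := by
  show LipschitzWith 1 fun x => max 0 (min x (2 - x))
  simpa using (LipschitzWith.const (0 : ℝ)).max
    (LipschitzWith.id.min ((LipschitzWith.const (2 : ℝ)).sub LipschitzWith.id))

theorem continuous_tent : Continuous tent := lipschitzWith_one_tent.continuous

theorem tent_of_notMem_Ioo {x : ℝ} (hx : x ∉ Ioo 0 2) : tent x = 0 := by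
  rw [mem_Ioo, not_and_or, not_lt, not_lt] at hx
  rcases hx with hx | hx
  · exact max_eq_left ((min_le_left _ _).trans hx)
  · exact max_eq_left ((min_le_right _ _).trans (by linarith))

theorem tent_of_mem_Icc {x : ℝ} (hx : x ∈ Icc 0 1) : tent x = x := by
  rw [tent, min_eq_left (by linarith [hx.2]), max_eq_right hx.1]

theorem tent_of_mem_Icc_one_two {x : ℝ} (hx : x ∈ Icc 1 2) : tent x = 2 - x := by
  rw [tent, min_eq_right (by linarith [hx.1]), max_eq_right (by linarith [hx.2])]

theorem hasDerivAt_tent {x : ℝ} (hx : x ∈ Ioo 0 2 \ {1}) : HasDerivAt tent (tentDeriv x) x := by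
  obtain ⟨⟨hx0, hx2⟩, hx1⟩ := hx
  rcases lt_or_gt_of_ne hx1 with hx1 | hx1
  · have hloc : tent =ᶠ[𝓝 x] id := by
      filter_upwards [Ioo_mem_nhds hx0 hx1] with y hy using tent_of_mem_Icc (Ioo_subset_Icc_self hy)
    have hval : tentDeriv x = 1 := by simp [tentDeriv, hx0, hx1.le, hx1.not_gt]
    exact hval ▸ (hasDerivAt_id x).congr_of_eventuallyEq hloc
  · have hloc : tent =ᶠ[𝓝 x] fun y => 2 - y := by
      filter_upwards [Ioo_mem_nhds hx1 hx2] with y hy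
      exact tent_of_mem_Icc_one_two (Ioo_subset_Icc_self hy)
    have hval : tentDeriv x = -1 := by simp [tentDeriv, hx1, hx2.le, hx1.not_ge]
    exact hval ▸ ((hasDerivAt_id' x).const_sub 2).congr_of_eventuallyEq hloc

theorem tentDeriv_of_notMem_Icc {x : ℝ} (hx : x ∉ Icc 0 2) : tentDeriv x = 0 := by
  rw [mem_Icc, not_and_or, not_le, not_le] at hx
  rcases hx with hx | hx <;> simp [tentDeriv, hx.not_gt, hx.not_ge] <;> intro <;> linarith

theorem integrable_tentDeriv : Integrable tentDeriv := by
  apply Integrable.sub <;>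
  · rw [integrable_indicator_iff measurableSet_Ioc]
    exact integrableOn_const (by simp) (by simp)

theorem integral_abs_tentDeriv : ∫ x, |tentDeriv x| = 2 := by
  have hind : (fun x => |tentDeriv x|) = (Ioc (0 : ℝ) 2).indicator 1 := by
    ext x
    simp only [tentDeriv, indicator, mem_Ioc, Pi.one_apply]
    split_ifs <;> simp_all <;> linarith
  rw [hind, integral_indicator_one measurableSet_Ioc]
  simp

theorem integral_tent_mul_deriv {φ : ℝ → ℝ} (hφ : ContDiff ℝ 1 φ) :
    ∫ x, tent x * deriv φ x = -∫ x, tentDeriv x * φ x :=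
  integral_mul_deriv_eq_neg_of_hasDerivAt_off_countable (by norm_num) (countable_singleton 1)
    continuous_tent (fun _ => tent_of_notMem_Ioo) (fun _ => tentDeriv_of_notMem_Icc)
    (fun _ => hasDerivAt_tent) integrable_tentDeriv.intervalIntegrable hφ

def gagliardoDensity (s : ℝ) (f : ℝ → ℝ) (x : ℝ) : ℝ :=
  ∫ h in Icc (-1 : ℝ) 1, |f (x + h) - f x| / |h| ^ (1 + s)

section Lipschitz

variable {f : ℝ → ℝ} {K : ℝ≥0} {s : ℝ}

theorem abs_sub_div_abs_rpow_le (hf : LipschitzWith K f) (x h : ℝ) :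
    |f (x + h) - f x| / |h| ^ (1 + s) ≤ K * |h| ^ (-s) := by
  rcases eq_or_ne h 0 with rfl | hh
  · simp only [add_zero, sub_self, abs_zero, zero_div]
    positivity
  have hpos : 0 < |h| := abs_pos.2 hh
  have hlip : |f (x + h) - f x| ≤ K * |h| := by
    simpa [Real.dist_eq] using hf.dist_le_mul (x + h) x
  calc |f (x + h) - f x| / |h| ^ (1 + s) ≤ K * |h| / |h| ^ (1 + s) := by gcongr
    _ = K * |h| ^ (-s) := by
      rw [Real.rpow_add hpos, Real.rpow_one, Real.rpow_neg hpos.le]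
      field_simp

theorem measurable_uncurry_abs_sub_div_abs_rpow (hf : Measurable f) :
    Measurable (Function.uncurry fun x h : ℝ => |f (x + h) - f x| / |h| ^ (1 + s)) := by
  fun_prop

theorem integrableOn_abs_rpow_neg_Icc (hs : s < 1) :
    IntegrableOn (fun h : ℝ => |h| ^ (-s)) (Icc (-1) 1) :=
  (intervalIntegrable_iff_integrableOn_Icc_of_le (by norm_num)).1
    (intervalIntegrable_abs_rpow (by linarith) _ _)

theorem integrableOn_abs_sub_div_abs_rpow (hf : LipschitzWith K f) (hs : s < 1) (x : ℝ) :
    IntegrableOn (fun h => |f (x + h) - f x| / |h| ^ (1 + s)) (Icc (-1 : ℝ) 1) := by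
  refine ((integrableOn_abs_rpow_neg_Icc hs).const_mul (K : ℝ)).mono'
    ((measurable_uncurry_abs_sub_div_abs_rpow hf.continuous.measurable).comp
      measurable_prodMk_left).aestronglyMeasurable (Eventually.of_forall fun h => ?_)
  rw [Real.norm_eq_abs, abs_of_nonneg (by positivity)]
  exact abs_sub_div_abs_rpow_le hf x h

theorem gagliardoDensity_nonneg (f : ℝ → ℝ) (s x : ℝ) : 0 ≤ gagliardoDensity s f x :=
  integral_nonneg fun _ => by positivity

theorem integrable_gagliardoDensity (hf : LipschitzWith K f) {a b : ℝ}
    (hf_zero : ∀ x ∉ Icc a b, f x = 0) (hs : s < 1) : Integrable (gagliardoDensity s f) := by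
  have hmeas : StronglyMeasurable (gagliardoDensity s f) :=
    (measurable_uncurry_abs_sub_div_abs_rpow hf.continuous.measurable).stronglyMeasurable
      |>.integral_prod_right
  have hbound : ∀ x, ‖gagliardoDensity s f x‖ ≤ ∫ h in Icc (-1 : ℝ) 1, K * |h| ^ (-s) := fun x => by
    rw [Real.norm_eq_abs, abs_of_nonneg (gagliardoDensity_nonneg f s x)]
    exact integral_mono_of_nonneg (Eventually.of_forall fun _ => by positivity)
      ((integrableOn_abs_rpow_neg_Icc hs).const_mul _)
      (Eventually.of_forall (abs_sub_div_abs_rpow_le hf x))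
  have hzero : ∀ x ∉ Icc (a - 1) (b + 1), gagliardoDensity s f x = 0 := by
    intro x hx
    refine setIntegral_eq_zero_of_forall_eq_zero fun h hh => ?_
    have hxh : x + h ∉ Icc a b := fun hm => hx ⟨by linarith [hm.1, hh.2], by linarith [hm.2, hh.1]⟩
    have hx' : x ∉ Icc a b := fun hm => hx ⟨by linarith [hm.1], by linarith [hm.2]⟩
    simp [hf_zero _ hxh, hf_zero _ hx']
  refine IntegrableOn.integrable_of_forall_notMem_eq_zero ?_ hzero
  exact Measure.integrableOn_of_bounded (by simp) hmeas.aestronglyMeasurable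
    (Eventually.of_forall hbound)

end Lipschitz

theorem one_div_two_mul_le_gagliardoDensity_tent {s x : ℝ} (hs₀ : 0 ≤ s) (hs₁ : s < 1)
    (hx : x ∈ Ioo 0 (1 / 2)) : 1 / (2 * (1 - s)) ≤ gagliardoDensity s tent x := by
  have h1s : 0 < 1 - s := by linarith
  have hhalf : (1 / 2 : ℝ) ≤ (1 / 2) ^ (1 - s) := by
    simpa using Real.rpow_le_rpow_of_exponent_ge (x := 1 / 2) (by norm_num) (by norm_num)
      (by linarith : 1 - s ≤ 1)
  calc 1 / (2 * (1 - s)) ≤ (1 / 2) ^ (1 - s) / (1 - s) := by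
        rw [div_mul_eq_div_div, div_le_div_iff_of_pos_right h1s]
        exact hhalf
    _ = ∫ h in (0 : ℝ)..1 / 2, h ^ (-s) := by
        rw [integral_rpow (Or.inl (by linarith)), Real.zero_rpow (by linarith), neg_add_eq_sub]
        ring
    _ = ∫ h in Ioc 0 (1 / 2), |tent (x + h) - tent x| / |h| ^ (1 + s) := by
        rw [intervalIntegral.integral_of_le (by norm_num)]
        refine setIntegral_congr_fun measurableSet_Ioc fun h hh => ?_
        rw [tent_of_mem_Icc ⟨by linarith [hx.1, hh.1], by linarith [hx.2, hh.2]⟩,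
          tent_of_mem_Icc (Ioo_subset_Icc_self ⟨hx.1, by linarith [hx.2]⟩), add_sub_cancel_left,
          abs_of_pos hh.1, Real.rpow_add hh.1, Real.rpow_one, Real.rpow_neg hh.1.le]
        field_simp [hh.1.ne']
    _ ≤ gagliardoDensity s tent x :=
        setIntegral_mono_set (integrableOn_abs_sub_div_abs_rpow lipschitzWith_one_tent hs₁ x)
          (Eventually.of_forall fun _ => by positivity)
          (Ioc_subset_Icc_self.trans (Icc_subset_Icc (by norm_num) (by norm_num))).eventuallyLE

theorem one_div_four_mul_le_integral_gagliardoDensity_tent {s : ℝ} (hs₀ : 0 ≤ s) (hs₁ : s < 1) :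
    1 / (4 * (1 - s)) ≤ ∫ x, gagliardoDensity s tent x := by
  have hint : Integrable (gagliardoDensity s tent) :=
    integrable_gagliardoDensity lipschitzWith_one_tent
      (fun _ hx => tent_of_notMem_Ioo fun h => hx (Ioo_subset_Icc_self h)) hs₁
  calc 1 / (4 * (1 - s)) = 1 / (2 * (1 - s)) * volume.real (Ioo (0 : ℝ) (1 / 2)) := by
        rw [Real.volume_real_Ioo, sub_zero, max_eq_left (by norm_num)]
        field_simp
        ring
    _ ≤ ∫ x in Ioo 0 (1 / 2), gagliardoDensity s tent x :=
        setIntegral_ge_of_const_le_real measurableSet_Ioo (by simp)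
          (fun _ hx => one_div_two_mul_le_gagliardoDensity_tent hs₀ hs₁ hx) hint.integrableOn
    _ ≤ ∫ x, gagliardoDensity s tent x :=
        setIntegral_le_integral hint (Eventually.of_forall (gagliardoDensity_nonneg _ _))

theorem exists_mem_Ioo_lt_one_sub_rpow {δ : ℝ} (hδ : δ < 0) (M : ℝ) :
    ∃ s ∈ Ioo (0 : ℝ) 1, M < (1 - s) ^ δ := by
  have hnear : ∀ᶠ t in 𝓝[>] (0 : ℝ), t ∈ Ioo 0 1 := Ioo_mem_nhdsGT one_pos
  obtain ⟨t, ht, hMt⟩ :=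
    (hnear.and ((tendsto_rpow_neg_nhdsGT_zero hδ).eventually_gt_atTop M)).exists
  exact ⟨1 - t, ⟨by linarith [ht.2], by linarith [ht.1]⟩, by rwa [sub_sub_cancel]⟩

end BBMSharpness

open BBMSharpness

theorem statement7_general (γ C : ℝ)
    (H : ∀ s ∈ Set.Ioo (0 : ℝ) 1, ∀ f g : ℝ → ℝ,
      LocallyIntegrable f volume → Integrable g →
      (∀ φ : ℝ → ℝ, ContDiff ℝ (⊤ : ℕ∞) φ → HasCompactSupport φ →
        ∫ x, f x * deriv φ x = -∫ x, g x * φ x) →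
      (1 - s) ^ γ * ∫ x : ℝ, ∫ h in Set.Icc (-1 : ℝ) 1,
          |f (x + h) - f x| / |h| ^ (1 + s) ≤ C * ∫ x, |g x|) :
    1 ≤ γ := by
  by_contra! hγ
  obtain ⟨s, hs, hCs⟩ := exists_mem_Ioo_lt_one_sub_rpow (by linarith : γ - 1 < 0) (8 * C)
  have h1s : 0 < 1 - s := by linarith [hs.2]
  have hupper := H s hs tent tentDeriv continuous_tent.locallyIntegrable integrable_tentDeriv
    fun φ hφ _ => integral_tent_mul_deriv (hφ.of_le (by exact_mod_cast le_top))
  rw [integral_abs_tentDeriv] at hupper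
  have hlower := one_div_four_mul_le_integral_gagliardoDensity_tent hs.1.le hs.2
  have hchain := hupper.trans' (mul_le_mul_of_nonneg_left hlower (by positivity))
  rw [mul_one_div, div_le_iff₀ (by positivity)] at hchain
  have hbound : (1 - s) ^ (γ - 1) ≤ 8 * C := by
    rw [Real.rpow_sub_one h1s.ne', div_le_iff₀ h1s]
    linarith
  linarith

/-- Proposition 2.6, Case 1 (`n = 1`, `p = q = 1`): sharpness of the factor `1 - s`. -/
theorem statement7 (γ C : ℝ) (hγ : 0 < γ) (hC : 0 < C)
    (H : ∀ s ∈ Set.Ioo (0 : ℝ) 1, ∀ f g : ℝ → ℝ,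
      LocallyIntegrable f volume → Integrable g →
      (∀ φ : ℝ → ℝ, ContDiff ℝ (⊤ : ℕ∞) φ → HasCompactSupport φ →
        ∫ x, f x * deriv φ x = -∫ x, g x * φ x) →
      (1 - s) ^ γ * ∫ x : ℝ, ∫ h in Set.Icc (-1 : ℝ) 1,
          |f (x + h) - f x| / |h| ^ (1 + s) ≤ C * ∫ x, |g x|) :
    1 ≤ γ :=
  statement7_general γ C H

end
end

section
/- Let $k\in\mathbb{N}$, $s\in(0,1)$, and $p,q\in[1,\infty)$ with $n(\frac{1}{p}-\frac{1}{q})\ge k$. Then there exists $f\in C_c^\infty(\mathbb{R}^n)$ (any smooth $f$ with $\mathbf{1}_{B(\mathbf{0},1/2)}\le f\le\mathbf{1}_{B(\mathbf{0},3/2)}$ works) such that $\int_{\mathbb{R}^n}\left(\int_{\mathbb{R}^n}\frac{|\Delta_h^k f(x)|^q}{|h|^{n+skq}}\,dh\right)^{p/q}\,dx=\infty$. -/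
open MeasureTheory Real Set
open scoped Classical ENNReal

noncomputable section

open Paper
open Metric

/-! For `‖x‖ ≥ 2k` and `h` in the ball of radius `1/(2k)` around `-x/k`, the point `x + k h` lies
in `B(0, 1/2)` while the points `x + j h`, `j < k`, stay outside `B(0, 3/2)`; so `Δ_h^k f(x) = 1`
and `‖h‖ ≤ 2‖x‖/k` on a ball whose volume does not depend on `x`. The inner integral is
therefore `≳ ‖x‖^(-β)` with `β = n + skq`, and its `p/q`-th power is `≳ ‖x‖^(-γ)` with
`γ = βp/q`. The hypothesis `n(1/p - 1/q) ≥ k > sk` gives `γ < n`, so this is not integrable at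
infinity. -/

lemma lintegral_compl_closedBall_norm_rpow_neg_eq_top {E : Type*} [NormedAddCommGroup E]
    [NormedSpace ℝ E] [FiniteDimensional ℝ E] [Nontrivial E] [MeasurableSpace E] [BorelSpace E]
    (μ : Measure E) [μ.IsAddHaarMeasure] {γ R : ℝ} (hγ : γ < Module.finrank ℝ E) (hR : 0 < R) :
    ∫⁻ x in (closedBall (0 : E) R)ᶜ, ENNReal.ofReal (‖x‖ ^ (-γ)) ∂μ = ⊤ := by
  set g : ℝ → ℝ := (Ioi R).indicator fun r ↦ r ^ (-γ)
  have hg : Measurable g := (measurable_id.pow_const _).indicator measurableSet_Ioi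
  have hset : ∫⁻ x in (closedBall (0 : E) R)ᶜ, ENNReal.ofReal (‖x‖ ^ (-γ)) ∂μ =
      ∫⁻ x, ENNReal.ofReal (g ‖x‖) ∂μ := by
    rw [← lintegral_indicator measurableSet_closedBall.compl]
    congr 1 with x
    by_cases hx : R < ‖x‖ <;> simp [g, hx]
  rw [hset]
  by_contra hfin
  have hg0 : ∀ x : E, 0 ≤ g ‖x‖ :=
    fun x ↦ indicator_nonneg (fun r hr ↦ Real.rpow_nonneg (hR.trans hr).le _) _
  have hint : Integrable (fun x : E ↦ g ‖x‖) μ :=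
    (lintegral_ofReal_ne_top_iff_integrable (hg.comp measurable_norm).aestronglyMeasurable
      (.of_forall hg0)).1 hfin
  rw [integrable_fun_norm_addHaar] at hint
  have hpow : IntegrableOn (fun y : ℝ ↦ y ^ ((Module.finrank ℝ E : ℝ) - 1 - γ)) (Ioi R) := by
    refine (hint.mono_set (Ioi_subset_Ioi hR.le)).congr_fun (fun y (hy : R < y) ↦ ?_)
      measurableSet_Ioi
    have hy0 : 0 < y := hR.trans hy
    simp only [g, indicator_of_mem (show y ∈ Ioi R from hy), smul_eq_mul]
    rw [← Real.rpow_natCast, ← Real.rpow_add hy0, Nat.cast_sub Module.finrank_pos]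
    ring_nf
  rw [integrableOn_Ioi_rpow_iff hR] at hpow
  linarith

namespace ContDiffBump

variable {E : Type*} [NormedAddCommGroup E] [NormedSpace ℝ E] [HasContDiffBump E] {c : E}
  (φ : ContDiffBump c) (x : E)

lemma indicator_ball_rIn_le : (ball c φ.rIn).indicator (fun _ ↦ (1 : ℝ)) x ≤ φ x := by
  by_cases hx : x ∈ ball c φ.rIn
  · rw [indicator_of_mem hx, φ.one_of_mem_closedBall (ball_subset_closedBall hx)]
  · rw [indicator_of_notMem hx]
    exact φ.nonneg

lemma le_indicator_ball_rOut : φ x ≤ (ball c φ.rOut).indicator (fun _ ↦ (1 : ℝ)) x := by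
  by_cases hx : x ∈ ball c φ.rOut
  · rw [indicator_of_mem hx]
    exact φ.le_one
  · rw [indicator_of_notMem hx, φ.zero_of_le_dist (not_lt.1 hx)]

end ContDiffBump

lemma natCast_mul_norm_le_of_norm_add_nsmul_le {E : Type*} [NormedAddCommGroup E] [NormedSpace ℝ E]
    {x h : E} {k : ℕ} {r : ℝ} (hy : ‖x + k • h‖ ≤ r) : k * ‖h‖ ≤ ‖x‖ + r := by
  have : ‖k • h‖ ≤ ‖x + k • h‖ + ‖x‖ := by
    simpa using norm_sub_le (x + k • h) x
  rw [RCLike.norm_nsmul ℝ, nsmul_eq_mul] at this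
  linarith

lemma three_halves_le_norm_add_nsmul {E : Type*} [NormedAddCommGroup E] [NormedSpace ℝ E]
    {x h : E} {j k : ℕ} (hjk : j < k) (hx : 2 * k ≤ ‖x‖) (hy : ‖x + k • h‖ ≤ 1 / 2) :
    3 / 2 ≤ ‖x + j • h‖ := by
  have hkh := natCast_mul_norm_le_of_norm_add_nsmul_le hy
  have hjh : ‖x‖ - j * ‖h‖ ≤ ‖x + j • h‖ := by
    have := norm_sub_norm_le x (-(j • h))
    rw [norm_neg, sub_neg_eq_add] at this
    linarith [norm_nsmul_le (a := h) (n := j)]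
  have hjk' : (j : ℝ) + 1 ≤ k := by exact_mod_cast hjk
  nlinarith [norm_nonneg h, norm_nonneg x, (Nat.cast_nonneg j : (0 : ℝ) ≤ j)]

namespace Paper

section BallBump

variable {E : Type*} [NormedAddCommGroup E]

def IsBallBump (f : E → ℝ) : Prop :=
  ∀ z, (ball (0 : E) (1 / 2)).indicator (fun _ ↦ (1 : ℝ)) z ≤ f z ∧
    f z ≤ (ball (0 : E) (3 / 2)).indicator (fun _ ↦ (1 : ℝ)) z

variable {f : E → ℝ} {z : E}

lemma IsBallBump.eq_one (hf : IsBallBump f) (hz : ‖z‖ < 1 / 2) : f z = 1 := by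
  have hmem : z ∈ ball (0 : E) (1 / 2) := mem_ball_zero_iff.2 hz
  have := hf z
  rw [indicator_of_mem hmem, indicator_of_mem (ball_subset_ball (by norm_num) hmem)] at this
  exact le_antisymm this.2 this.1

lemma IsBallBump.eq_zero (hf : IsBallBump f) (hz : 3 / 2 ≤ ‖z‖) : f z = 0 := by
  have hnot : z ∉ ball (0 : E) (3 / 2) := by rwa [mem_ball_zero_iff, not_lt]
  have := hf z
  rw [indicator_of_notMem hnot,
    indicator_of_notMem fun hm ↦ hnot (ball_subset_ball (by norm_num) hm)] at this
  exact le_antisymm this.2 this.1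

end BallBump

variable {n k : ℕ} {f : EuclideanSpace ℝ (Fin n) → ℝ} {h x : EuclideanSpace ℝ (Fin n)}

lemma kdiff_eq_of_forall_lt (hf : ∀ j < k, f (x + j • h) = 0) :
    kdiff k f h x = f (x + k • h) := by
  rw [kdiff, Finset.sum_eq_single_of_mem k (Finset.self_mem_range_succ k)]
  · simp
  · intro j hj hjk
    rw [hf j (by have := Finset.mem_range.1 hj; omega), mul_zero]

lemma IsBallBump.kdiff_eq_one (hf : IsBallBump f) (hx : 2 * k ≤ ‖x‖) (hy : ‖x + k • h‖ < 1 / 2) :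
    kdiff k f h x = 1 := by
  rw [kdiff_eq_of_forall_lt fun j hj ↦ hf.eq_zero (three_halves_le_norm_add_nsmul hj hx hy.le)]
  exact hf.eq_one hy

lemma IsBallBump.le_lintegral_kdiff (hf : IsBallBump f) (hk : 0 < k) {β : ℝ} (hβ : 0 ≤ β)
    (hx : 2 * k ≤ ‖x‖) (q : ℝ) :
    ENNReal.ofReal ((2 / k) ^ (-β) * ‖x‖ ^ (-β)) *
        volume (ball (0 : EuclideanSpace ℝ (Fin n)) (1 / (2 * k))) ≤
      ∫⁻ h, ENNReal.ofReal (|kdiff k f h x| ^ q / ‖h‖ ^ β) := by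
  have hk1 : (1 : ℝ) ≤ k := by exact_mod_cast hk
  have hk0 : (0 : ℝ) < k := by linarith
  set H := ball (-((k : ℝ)⁻¹ • x)) (1 / (2 * k))
  have hbound : ∀ h ∈ H, (2 / k) ^ (-β) * ‖x‖ ^ (-β) ≤ |kdiff k f h x| ^ q / ‖h‖ ^ β := by
    intro h hh
    have hy : ‖x + k • h‖ < 1 / 2 := by
      have hxy : x + k • h = (k : ℝ) • (h - -((k : ℝ)⁻¹ • x)) := by
        rw [sub_neg_eq_add, smul_add, smul_smul, mul_inv_cancel₀ hk0.ne', one_smul, add_comm,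
          Nat.cast_smul_eq_nsmul]
      rw [hxy, norm_smul, Real.norm_of_nonneg hk0.le, ← dist_eq_norm]
      calc (k : ℝ) * dist h _ < k * (1 / (2 * k)) := mul_lt_mul_of_pos_left (mem_ball.1 hh) hk0
        _ = 1 / 2 := by field_simp
    have hh0 : 0 < ‖h‖ := norm_pos_iff.2 fun h0 ↦ by
      subst h0
      simp only [smul_zero, add_zero] at hy
      linarith
    have hkh := natCast_mul_norm_le_of_norm_add_nsmul_le hy.le
    rw [hf.kdiff_eq_one hx hy, abs_one, Real.one_rpow, one_div, ← Real.rpow_neg (norm_nonneg h),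
      ← Real.mul_rpow (by positivity) (norm_nonneg x)]
    refine Real.rpow_le_rpow_of_nonpos hh0 ?_ (neg_nonpos.2 hβ)
    rw [div_mul_eq_mul_div, le_div_iff₀ hk0]
    linarith
  calc _ = ∫⁻ _ in H, ENNReal.ofReal ((2 / k) ^ (-β) * ‖x‖ ^ (-β)) := by
        rw [setLIntegral_const, show volume H = _ from Measure.addHaar_ball_center _ _ _]
    _ ≤ ∫⁻ h in H, ENNReal.ofReal (|kdiff k f h x| ^ q / ‖h‖ ^ β) :=
        setLIntegral_mono' measurableSet_ball fun h hh ↦ ENNReal.ofReal_le_ofReal (hbound h hh)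
    _ ≤ _ := setLIntegral_le_lintegral _ _

lemma IsBallBump.lintegral_rpow_lintegral_kdiff_eq_top (hf : IsBallBump f) (hk : 0 < k)
    {q β r : ℝ} (hβ : 0 ≤ β) (hr : 0 < r) (hβr : β * r < n) :
    ∫⁻ x, (∫⁻ h, ENNReal.ofReal (|kdiff k f h x| ^ q / ‖h‖ ^ β)) ^ r = ⊤ := by
  have : Nontrivial (EuclideanSpace ℝ (Fin n)) := Module.nontrivial_of_finrank_pos <| by
    rw [finrank_euclideanSpace_fin]
    exact_mod_cast (mul_nonneg hβ hr.le).trans_lt hβr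
  have hk0 : (0 : ℝ) < k := by exact_mod_cast hk
  set V := volume (ball (0 : EuclideanSpace ℝ (Fin n)) (1 / (2 * k)))
  set c := (ENNReal.ofReal ((2 / k) ^ (-β)) * V) ^ r
  have hc0 : c ≠ 0 := by
    have : V ≠ 0 := (measure_ball_pos volume 0 (by positivity)).ne'
    simp [c, ENNReal.rpow_eq_zero_iff, hr, hr.not_gt, Real.rpow_pos_of_pos, hk0, this]
  have hctop : c ≠ ⊤ := ENNReal.rpow_ne_top_of_nonneg hr.le
    (ENNReal.mul_ne_top ENNReal.ofReal_ne_top measure_ball_lt_top.ne)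
  set A := (closedBall (0 : EuclideanSpace ℝ (Fin n)) (2 * k))ᶜ
  have hlower : ∀ x ∈ A, c * ENNReal.ofReal (‖x‖ ^ (-(β * r))) ≤
      (∫⁻ h, ENNReal.ofReal (|kdiff k f h x| ^ q / ‖h‖ ^ β)) ^ r := by
    intro x hx
    have hx : 2 * k ≤ ‖x‖ := by
      simp only [A, mem_compl_iff, mem_closedBall_zero_iff, not_le] at hx
      exact hx.le
    calc c * ENNReal.ofReal (‖x‖ ^ (-(β * r)))
        = (ENNReal.ofReal ((2 / k) ^ (-β) * ‖x‖ ^ (-β)) * V) ^ r := by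
          rw [ENNReal.ofReal_mul (by positivity), mul_right_comm,
            ENNReal.mul_rpow_of_nonneg _ _ hr.le,
            ENNReal.ofReal_rpow_of_nonneg (by positivity) hr.le, ← Real.rpow_mul (norm_nonneg x),
            neg_mul]
      _ ≤ _ := ENNReal.rpow_le_rpow (hf.le_lintegral_kdiff hk hβ hx q) hr.le
  refine top_unique ?_
  calc (⊤ : ℝ≥0∞) = c * ∫⁻ x in A, ENNReal.ofReal (‖x‖ ^ (-(β * r))) := by
        rw [lintegral_compl_closedBall_norm_rpow_neg_eq_top _ (by simpa using hβr) (by positivity),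
          ENNReal.mul_top hc0]
    _ = ∫⁻ x in A, c * ENNReal.ofReal (‖x‖ ^ (-(β * r))) := (lintegral_const_mul' c _ hctop).symm
    _ ≤ ∫⁻ x in A, (∫⁻ h, ENNReal.ofReal (|kdiff k f h x| ^ q / ‖h‖ ^ β)) ^ r :=
        setLIntegral_mono' measurableSet_closedBall.compl hlower
    _ ≤ _ := setLIntegral_le_lintegral _ _

end Paper

theorem statement12_general (n k : ℕ) (hk : 0 < k) (s p q : ℝ)
    (hs : s ∈ Set.Ioo (0 : ℝ) 1) (hp : 1 ≤ p) (hq : 1 ≤ q)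
    (hpq : (k : ℝ) ≤ (n : ℝ) * (1 / p - 1 / q)) :
    ∃ f : EuclideanSpace ℝ (Fin n) → ℝ, ContDiff ℝ (⊤ : ℕ∞) f ∧ HasCompactSupport f ∧
      (∀ x, Set.indicator (Metric.ball (0 : EuclideanSpace ℝ (Fin n)) (1 / 2))
          (fun _ => (1 : ℝ)) x ≤ f x ∧
        f x ≤ Set.indicator (Metric.ball (0 : EuclideanSpace ℝ (Fin n)) (3 / 2))
          (fun _ => (1 : ℝ)) x) ∧
      (∫⁻ x, (∫⁻ h, ENNReal.ofReal
          (|kdiff k f h x| ^ q / ‖h‖ ^ ((n : ℝ) + s * k * q))) ^ (p / q)) = ⊤ := by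
  obtain ⟨hs0, hs1⟩ := hs
  have hp0 : 0 < p := by linarith
  have hq0 : 0 < q := by linarith
  have hk0 : (0 : ℝ) < k := by exact_mod_cast hk
  have hexp : ((n : ℝ) + s * k * q) * (p / q) < n := by
    have hsk : s * k * p < k * p := by nlinarith [mul_pos hk0 hp0]
    have hkp : (k : ℝ) * p ≤ n - n * (p / q) := by
      calc (k : ℝ) * p ≤ n * (1 / p - 1 / q) * p := mul_le_mul_of_nonneg_right hpq hp0.le
        _ = n - n * (p / q) := by field_simp
    calc ((n : ℝ) + s * k * q) * (p / q) = n * (p / q) + s * k * p := by field_simp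
      _ < n := by linarith
  let φ : ContDiffBump (0 : EuclideanSpace ℝ (Fin n)) := ⟨1 / 2, 3 / 2, by norm_num, by norm_num⟩
  have hφ : IsBallBump (φ : EuclideanSpace ℝ (Fin n) → ℝ) :=
    fun x ↦ ⟨φ.indicator_ball_rIn_le x, φ.le_indicator_ball_rOut x⟩
  exact ⟨φ, φ.contDiff, φ.hasCompactSupport, hφ,
    hφ.lintegral_rpow_lintegral_kdiff_eq_top hk (by positivity) (by positivity) hexp⟩

/-- Proposition 6.3(i): divergence of the global Gagliardo-type seminorm when
`n(1/p - 1/q) ≥ k`, for any bump function between the indicators of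
`B(0,1/2)` and `B(0,3/2)`. -/
theorem statement12 (n k : ℕ) (hn : 0 < n) (hk : 0 < k) (s p q : ℝ)
    (hs : s ∈ Set.Ioo (0 : ℝ) 1) (hp : 1 ≤ p) (hq : 1 ≤ q)
    (hpq : (k : ℝ) ≤ (n : ℝ) * (1 / p - 1 / q)) :
    ∃ f : EuclideanSpace ℝ (Fin n) → ℝ, ContDiff ℝ (⊤ : ℕ∞) f ∧ HasCompactSupport f ∧
      (∀ x, Set.indicator (Metric.ball (0 : EuclideanSpace ℝ (Fin n)) (1 / 2))
          (fun _ => (1 : ℝ)) x ≤ f x ∧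
        f x ≤ Set.indicator (Metric.ball (0 : EuclideanSpace ℝ (Fin n)) (3 / 2))
          (fun _ => (1 : ℝ)) x) ∧
      (∫⁻ x, (∫⁻ h, ENNReal.ofReal
          (|kdiff k f h x| ^ q / ‖h‖ ^ ((n : ℝ) + s * k * q))) ^ (p / q)) = ⊤ :=
  statement12_general n k hk s p q hs hp hq hpq
end
end

section
/- Let $n\in\mathbb{N}$ and $\delta\in(0,n]$, and define $\omega(x):=|x|^{\delta-n}$ for $x\in\mathbb{R}^n\setminus\{\mathbf{0}\}$. Then $\omega\in A_1$, and there exist positive constants $c_1,c_2$ depending only on $n$ (independent of $\delta$) such that $c_1\delta^{-1}\le[\omega]_{A_1}\le c_2\delta^{-1}$ and $c_1\delta^{-1}\le\omega(B(\mathbf{0},1))\le c_2\delta^{-1}$. -/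
open MeasureTheory Real Set
open scoped Classical ENNReal

noncomputable section

open Paper

/-!
In polar coordinates `∫_{B(0,R)} |x|^{δ-n} = n |B(0,1)| R^δ / δ`; this gives `ω(B(0,1))` and the
local integrability of `ω`. Let `Q` be a cube of diameter `D` and `y ∈ Q`. If `|y| ≤ 2D`, then
`Q ⊆ B(0,4D)`, and as `(4D)^{δ-n} ≤ ω(y)` the ball integral bounds the average of `ω` over `Q`
by `c_n δ⁻¹ ω(y)`. If `|y| > 2D`, then `|x| ≥ |y|/2` on `Q`, so `ω ≤ 2^n ω(y)` there.
Conversely, the average of `ω` over `[-1,1)^n ⊇ B(0,1)` is at least `2^{-n} ω(B(0,1))`, while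
`ω ≤ 2^n` on the subcube `[1/2,1)^n`, which has positive measure: this forces `[ω]_{A₁} ≳ 1/δ`.
-/

open Metric Module

section Far

variable {E : Type*} [NormedAddCommGroup E] [MeasurableSpace E] {μ : Measure E}

theorem setAverage_norm_rpow_le_of_forall_le_two_mul_norm {p : ℝ} (hp : p ≤ 0)
    {s : Set E} (hs : μ s < ∞) {y : E} (hy : y ≠ 0) (hfar : ∀ x ∈ s, ‖y‖ ≤ 2 * ‖x‖) :
    ⨍ x in s, ‖x‖ ^ p ∂μ ≤ 2 ^ (-p) * ‖y‖ ^ p := by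
  have hy0 : 0 < ‖y‖ := norm_pos_iff.2 hy
  have hbound : ∀ x ∈ s, ‖‖x‖ ^ p‖ ≤ 2 ^ (-p) * ‖y‖ ^ p := by
    intro x hx
    rw [norm_of_nonneg (rpow_nonneg (norm_nonneg x) _)]
    calc ‖x‖ ^ p ≤ (‖y‖ / 2) ^ p :=
          rpow_le_rpow_of_nonpos (by positivity) (by linarith [hfar x hx]) hp
      _ = 2 ^ (-p) * ‖y‖ ^ p := by
          rw [div_rpow hy0.le zero_le_two, div_eq_mul_inv, ← rpow_neg zero_le_two, mul_comm]
  have hint := (le_abs_self _).trans (norm_setIntegral_le_of_norm_le_const hs hbound)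
  rw [setAverage_eq, smul_eq_mul]
  calc (μ.real s)⁻¹ * ∫ x in s, ‖x‖ ^ p ∂μ
      ≤ (μ.real s)⁻¹ * (2 ^ (-p) * ‖y‖ ^ p * μ.real s) := by gcongr
    _ = 2 ^ (-p) * ‖y‖ ^ p * ((μ.real s)⁻¹ * μ.real s) := by ring
    _ ≤ 2 ^ (-p) * ‖y‖ ^ p :=
        mul_le_of_le_one_right (by positivity) (inv_mul_le_one_of_le₀ le_rfl measureReal_nonneg)

end Far

section Radial

variable {E : Type*} [NormedAddCommGroup E] [NormedSpace ℝ E] [FiniteDimensional ℝ E]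
  [MeasurableSpace E] [BorelSpace E] [Nontrivial E] (μ : Measure E) [μ.IsAddHaarMeasure]

theorem integral_norm_rpow_ball {δ R : ℝ} (hδ : 0 < δ) (hR : 0 < R) :
    ∫ x in ball (0 : E) R, ‖x‖ ^ (δ - finrank ℝ E) ∂μ =
      finrank ℝ E * μ.real (ball 0 1) * (R ^ δ / δ) := by
  have hd : 1 ≤ finrank ℝ E := finrank_pos
  have hradial : (ball (0 : E) R).indicator (fun x => ‖x‖ ^ (δ - finrank ℝ E)) =
      fun x => (Iio R).indicator (fun r => r ^ (δ - finrank ℝ E)) ‖x‖ := by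
    ext x; simp [indicator]
  have hpolar : ∀ r ∈ Ioi (0 : ℝ), r ^ (finrank ℝ E - 1) •
      (Iio R).indicator (fun r => r ^ (δ - finrank ℝ E)) r =
        (Iio R).indicator (fun r => r ^ (δ - 1)) r := by
    intro r (hr : 0 < r)
    by_cases hrR : r < R
    · simp only [indicator_of_mem (mem_Iio.2 hrR), smul_eq_mul]
      rw [← rpow_natCast, ← rpow_add hr, Nat.cast_sub hd]
      ring_nf
    · simp [hrR]
  rw [← integral_indicator measurableSet_ball, hradial, integral_fun_norm_addHaar,
    setIntegral_congr_fun measurableSet_Ioi hpolar, setIntegral_indicator measurableSet_Iio,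
    Ioi_inter_Iio, ← integral_Ioc_eq_integral_Ioo, ← intervalIntegral.integral_of_le hR.le,
    integral_rpow (Or.inl (by linarith)), sub_add_cancel, zero_rpow hδ.ne', nsmul_eq_mul,
    smul_eq_mul, sub_zero, mul_assoc]

theorem integrableOn_norm_rpow_ball {δ R : ℝ} (hδ : 0 < δ) (hR : 0 < R) :
    IntegrableOn (fun x : E => ‖x‖ ^ (δ - finrank ℝ E)) (ball 0 R) μ := by
  refine (integrable_indicator_iff measurableSet_ball).1 (Integrable.of_integral_ne_zero ?_)
  rw [integral_indicator measurableSet_ball, integral_norm_rpow_ball μ hδ hR]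
  have : 0 < μ.real (ball (0 : E) 1) :=
    ENNReal.toReal_pos (measure_ball_pos μ 0 one_pos).ne' measure_ball_lt_top.ne
  have : (0 : ℝ) < finrank ℝ E := by exact_mod_cast finrank_pos
  positivity

theorem integrableOn_norm_rpow_of_isBounded {δ : ℝ} (hδ : 0 < δ) {s : Set E}
    (hs : Bornology.IsBounded s) :
    IntegrableOn (fun x : E => ‖x‖ ^ (δ - finrank ℝ E)) s μ := by
  obtain ⟨R, hR, hsR⟩ := hs.subset_ball_lt 0 0
  exact (integrableOn_norm_rpow_ball μ hδ hR).mono_set hsR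

theorem locallyIntegrable_norm_rpow {δ : ℝ} (hδ : 0 < δ) :
    LocallyIntegrable (fun x : E => ‖x‖ ^ (δ - finrank ℝ E)) μ := fun x =>
  ⟨ball x 1, ball_mem_nhds x one_pos, integrableOn_norm_rpow_of_isBounded μ hδ isBounded_ball⟩

theorem setAverage_norm_rpow_le_of_subset_ball {δ R : ℝ} (hδ : 0 < δ) (hδd : δ ≤ finrank ℝ E)
    {s : Set E} (hs : s ⊆ ball 0 R) {y : E} (hy : y ≠ 0) (hyR : ‖y‖ ≤ R) :
    ⨍ x in s, ‖x‖ ^ (δ - finrank ℝ E) ∂μ ≤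
      finrank ℝ E * μ.real (ball 0 1) * R ^ finrank ℝ E / (δ * μ.real s) *
        ‖y‖ ^ (δ - finrank ℝ E) := by
  have hy0 : 0 < ‖y‖ := norm_pos_iff.2 hy
  have hR : 0 < R := hy0.trans_le hyR
  have hint : ∫ x in s, ‖x‖ ^ (δ - finrank ℝ E) ∂μ ≤
      finrank ℝ E * μ.real (ball 0 1) * (R ^ δ / δ) := by
    rw [← integral_norm_rpow_ball μ hδ hR]
    exact setIntegral_mono_set (integrableOn_norm_rpow_ball μ hδ hR)
      (ae_of_all _ fun x => rpow_nonneg (norm_nonneg x) _) hs.eventuallyLE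
  have hRδ : R ^ δ ≤ R ^ finrank ℝ E * ‖y‖ ^ (δ - finrank ℝ E) := by
    rw [← rpow_natCast, ← sub_add_cancel δ (finrank ℝ E : ℝ), rpow_add hR, mul_comm,
      add_sub_cancel_right]
    exact mul_le_mul_of_nonneg_left (rpow_le_rpow_of_nonpos hy0 hyR (by linarith)) (by positivity)
  rw [setAverage_eq, smul_eq_mul]
  calc (μ.real s)⁻¹ * ∫ x in s, ‖x‖ ^ (δ - finrank ℝ E) ∂μ
      ≤ (μ.real s)⁻¹ * (finrank ℝ E * μ.real (ball 0 1) *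
          (R ^ finrank ℝ E * ‖y‖ ^ (δ - finrank ℝ E) / δ)) := by
        gcongr
        exact hint.trans (by gcongr)
    _ = _ := by ring

end Radial

section Cube

variable {n : ℕ}

def cube (a : EuclideanSpace ℝ (Fin n)) (l : ℝ) : Set (EuclideanSpace ℝ (Fin n)) :=
  {x | ∀ i, x i ∈ Ico (a i) (a i + l)}

theorem cube_eq_preimage (a : EuclideanSpace ℝ (Fin n)) (l : ℝ) :
    cube a l =
      (MeasurableEquiv.toLp 2 (Fin n → ℝ)).symm ⁻¹' univ.pi fun i => Ico (a i) (a i + l) := by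
  ext x; simp [cube, Set.mem_pi]

theorem measurableSet_cube (a : EuclideanSpace ℝ (Fin n)) (l : ℝ) : MeasurableSet (cube a l) := by
  rw [cube_eq_preimage]
  exact (MeasurableSet.univ_pi fun i => measurableSet_Ico).preimage
    (MeasurableEquiv.toLp 2 (Fin n → ℝ)).symm.measurable

theorem volume_cube (a : EuclideanSpace ℝ (Fin n)) (l : ℝ) :
    volume (cube a l) = ENNReal.ofReal l ^ n := by
  rw [cube_eq_preimage,
    (EuclideanSpace.volume_preserving_symm_measurableEquiv_toLp (Fin n)).measure_preimage
      (MeasurableSet.univ_pi fun i => measurableSet_Ico).nullMeasurableSet,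
    volume_pi_pi]
  simp [Real.volume_Ico]

theorem volume_real_cube (a : EuclideanSpace ℝ (Fin n)) {l : ℝ} (hl : 0 ≤ l) :
    volume.real (cube a l) = l ^ n := by
  rw [measureReal_def, volume_cube, ENNReal.toReal_pow, ENNReal.toReal_ofReal hl]

theorem norm_sub_le_of_mem_cube {a x y : EuclideanSpace ℝ (Fin n)} {l : ℝ} (hl : 0 ≤ l)
    (hx : x ∈ cube a l) (hy : y ∈ cube a l) : ‖x - y‖ ≤ √n * l := by
  rw [EuclideanSpace.norm_eq, ← sqrt_sq hl, ← sqrt_mul (Nat.cast_nonneg n)]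
  gcongr
  calc ∑ i, ‖(x - y) i‖ ^ 2 ≤ ∑ _i : Fin n, l ^ 2 := Finset.sum_le_sum fun i _ => by
        obtain ⟨⟨hx₁, hx₂⟩, hy₁, hy₂⟩ := And.intro (hx i) (hy i)
        rw [PiLp.sub_apply, Real.norm_eq_abs, sq_abs]
        exact sq_le_sq' (by linarith) (by linarith)
    _ = n * l ^ 2 := by simp

theorem isBounded_cube (a : EuclideanSpace ℝ (Fin n)) {l : ℝ} (hl : 0 ≤ l) :
    Bornology.IsBounded (cube a l) :=
  isBounded_iff.2 ⟨√n * l, fun _ hx _ hy => (dist_eq_norm _ _).trans_le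
    (norm_sub_le_of_mem_cube hl hx hy)⟩

end Cube

theorem memAp_one_iff {n : ℕ} {ω : EuclideanSpace ℝ (Fin n) → ℝ} {C : ℝ} :
    MemAp 1 ω C ↔ MemA1 ω C := by
  rw [MemAp, if_pos rfl]

theorem A1const_le {n : ℕ} {ω : EuclideanSpace ℝ (Fin n) → ℝ} {C : ℝ} (hC : 0 ≤ C)
    (h : MemA1 ω C) : A1const ω ≤ C :=
  csInf_le ⟨0, fun _ hC => hC.1⟩ ⟨hC, memAp_one_iff.2 h⟩

theorem le_A1const {n : ℕ} {ω : EuclideanSpace ℝ (Fin n) → ℝ} {b C₀ : ℝ} (hC₀ : 0 ≤ C₀)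
    (h₀ : MemA1 ω C₀) (hb : ∀ C, 0 ≤ C → MemA1 ω C → b ≤ C) : b ≤ A1const ω :=
  le_csInf ⟨C₀, hC₀, memAp_one_iff.2 h₀⟩ fun C hC => hb C hC.1 (memAp_one_iff.1 hC.2)

section PowerWeight

variable {n : ℕ} {δ : ℝ}

theorem two_rpow_sub_le_two_pow (hδ : 0 ≤ δ) : (2 : ℝ) ^ ((n : ℝ) - δ) ≤ 2 ^ n := by
  rw [← rpow_natCast]
  exact rpow_le_rpow_of_exponent_le one_le_two (by linarith)

theorem integral_norm_rpow_unitBall (hn : 0 < n) (hδ : 0 < δ) :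
    ∫ x in ball (0 : EuclideanSpace ℝ (Fin n)) 1, ‖x‖ ^ (δ - n) =
      n * volume.real (ball (0 : EuclideanSpace ℝ (Fin n)) 1) / δ := by
  have : Nonempty (Fin n) := Fin.pos_iff_nonempty.1 hn
  have := integral_norm_rpow_ball (volume : Measure (EuclideanSpace ℝ (Fin n))) hδ one_pos
  rwa [finrank_euclideanSpace_fin, one_rpow, mul_one_div] at this

theorem memA1_norm_rpow (hn : 0 < n) (hδ : 0 < δ) (hδn : δ ≤ n) :
    MemA1 (fun x : EuclideanSpace ℝ (Fin n) => ‖x‖ ^ (δ - n))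
      ((n * 2 ^ n + n * volume.real (ball (0 : EuclideanSpace ℝ (Fin n)) 1) * (4 * √n) ^ n) /
        δ) := by
  have : Nonempty (Fin n) := Fin.pos_iff_nonempty.1 hn
  rintro Q ⟨a, l, hl, rfl⟩
  set D := √n * l
  have hD : 0 < D := by positivity
  filter_upwards [ae_restrict_mem (measurableSet_cube a l),
    ae_restrict_of_ae (compl_mem_ae_iff.2 (measure_singleton 0))] with y hyQ (hy : y ≠ 0)
  have hdiam : ∀ x ∈ cube a l, ‖x - y‖ ≤ D := fun x hx => norm_sub_le_of_mem_cube hl.le hx hyQ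
  rcases le_or_gt ‖y‖ (2 * D) with hnear | hfar
  · have hsub : cube a l ⊆ ball 0 (4 * D) := fun x hx => by
      rw [mem_ball_zero_iff]
      linarith [norm_le_norm_add_norm_sub' x y, hdiam x hx]
    have := setAverage_norm_rpow_le_of_subset_ball volume hδ (by simpa using hδn) hsub hy
      (by linarith)
    simp only [finrank_euclideanSpace_fin, volume_real_cube a hl.le] at this
    refine this.trans (mul_le_mul_of_nonneg_right ?_ (by positivity))
    calc n * volume.real (ball (0 : EuclideanSpace ℝ (Fin n)) 1) * (4 * D) ^ n / (δ * l ^ n)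
        = n * volume.real (ball (0 : EuclideanSpace ℝ (Fin n)) 1) * (4 * √n) ^ n / δ := by
          field_simp
          ring
      _ ≤ _ := by gcongr; exact le_add_of_nonneg_left (by positivity)
  · have hfar' : ∀ x ∈ cube a l, ‖y‖ ≤ 2 * ‖x‖ := fun x hx => by
      linarith [norm_le_norm_add_norm_sub' y x, norm_sub_rev x y ▸ hdiam x hx]
    have := setAverage_norm_rpow_le_of_forall_le_two_mul_norm (μ := volume) (p := δ - n)
      (by linarith) (by simp [volume_cube]) hy hfar'
    refine this.trans (mul_le_mul_of_nonneg_right ?_ (by positivity))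
    rw [neg_sub, le_div_iff₀ hδ]
    calc (2 : ℝ) ^ ((n : ℝ) - δ) * δ ≤ 2 ^ n * n :=
          mul_le_mul (two_rpow_sub_le_two_pow hδ.le) hδn hδ.le (by positivity)
      _ ≤ _ := by rw [mul_comm]; exact le_add_of_nonneg_right (by positivity)

theorem le_of_memA1_norm_rpow (hn : 0 < n) (hδ : 0 < δ) (hδn : δ ≤ n) {C : ℝ} (hC : 0 ≤ C)
    (h : MemA1 (fun x : EuclideanSpace ℝ (Fin n) => ‖x‖ ^ (δ - n)) C) :
    n * volume.real (ball (0 : EuclideanSpace ℝ (Fin n)) 1) / (4 ^ n * δ) ≤ C := by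
  have : Nonempty (Fin n) := Fin.pos_iff_nonempty.1 hn
  set Q₀ := cube (WithLp.toLp 2 fun _ => -1 : EuclideanSpace ℝ (Fin n)) 2
  set S := cube (WithLp.toLp 2 fun _ => 1 / 2 : EuclideanSpace ℝ (Fin n)) (1 / 2)
  have hball : ball 0 1 ⊆ Q₀ := fun x hx i => by
    have := (PiLp.norm_apply_le x i).trans_lt (mem_ball_zero_iff.1 hx)
    rw [Real.norm_eq_abs, abs_lt] at this
    simp only [mem_Ico]
    constructor <;> linarith
  have hSQ : S ⊆ Q₀ := fun x hx i => by
    have := hx i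
    simp only [mem_Ico] at this ⊢
    constructor <;> linarith
  have havg : n * volume.real (ball (0 : EuclideanSpace ℝ (Fin n)) 1) / (2 ^ n * δ) ≤
      ⨍ x in Q₀, ‖x‖ ^ (δ - n) := by
    have hint := setIntegral_mono_set
      (integrableOn_norm_rpow_of_isBounded volume hδ (isBounded_cube _ zero_le_two))
      (ae_of_all _ fun x => rpow_nonneg (norm_nonneg x) _) hball.eventuallyLE
    rw [finrank_euclideanSpace_fin, integral_norm_rpow_unitBall hn hδ] at hint
    rw [setAverage_eq, volume_real_cube _ zero_le_two, smul_eq_mul, mul_comm (2 ^ n : ℝ),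
      ← div_div, div_eq_inv_mul]
    exact mul_le_mul_of_nonneg_left hint (by positivity)
  obtain ⟨y, hy, hyS⟩ : ∃ y, ⨍ x in Q₀, ‖x‖ ^ (δ - n) ≤ C * ‖y‖ ^ (δ - n) ∧ y ∈ S := by
    have : (ae (volume.restrict S)).NeBot := by
      rw [ae_neBot, Ne, Measure.restrict_eq_zero, volume_cube]
      simp
    exact ((ae_restrict_of_ae_restrict_of_subset hSQ (h Q₀ ⟨_, 2, two_pos, rfl⟩)).and
      (ae_restrict_mem (measurableSet_cube _ _))).exists
  have hy_norm : 1 / 2 ≤ ‖y‖ := by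
    exact (hyS ⟨0, hn⟩).1.trans ((le_abs_self _).trans (PiLp.norm_apply_le y _))
  have hωy : ‖y‖ ^ (δ - n) ≤ 2 ^ n := calc
    ‖y‖ ^ (δ - n) ≤ (1 / 2 : ℝ) ^ (δ - n) :=
        rpow_le_rpow_of_nonpos one_half_pos hy_norm (by linarith)
    _ = 2 ^ ((n : ℝ) - δ) := by
        rw [one_div, inv_rpow zero_le_two, ← rpow_neg zero_le_two, neg_sub]
    _ ≤ 2 ^ n := two_rpow_sub_le_two_pow hδ.le
  have h4 : (4 : ℝ) ^ n * δ = 2 ^ n * δ * 2 ^ n := by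
    rw [show (4 : ℝ) = 2 * 2 by norm_num, mul_pow]; ring
  rw [h4, ← div_div, div_le_iff₀ (by positivity)]
  exact havg.trans (hy.trans (mul_le_mul_of_nonneg_left hωy hC))

end PowerWeight

/-- Power weights `|x|^{δ-n}` with `δ ∈ (0, n]` are `A₁` weights with
`[ω]_{A₁} ∼ δ⁻¹` and `ω(B(0,1)) ∼ δ⁻¹`, uniformly in `δ`. -/
theorem statement15 (n : ℕ) (hn : 0 < n) :
    ∃ c₁ : ℝ, 0 < c₁ ∧ ∃ c₂ : ℝ, 0 < c₂ ∧ ∀ δ ∈ Set.Ioc (0 : ℝ) (n : ℝ),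
      IsA1 (fun x : EuclideanSpace ℝ (Fin n) => ‖x‖ ^ (δ - n)) ∧
      c₁ * δ⁻¹ ≤ A1const (fun x : EuclideanSpace ℝ (Fin n) => ‖x‖ ^ (δ - n)) ∧
      A1const (fun x : EuclideanSpace ℝ (Fin n) => ‖x‖ ^ (δ - n)) ≤ c₂ * δ⁻¹ ∧
      c₁ * δ⁻¹ ≤ (∫ x in Metric.ball (0 : EuclideanSpace ℝ (Fin n)) 1, ‖x‖ ^ (δ - n)) ∧
      (∫ x in Metric.ball (0 : EuclideanSpace ℝ (Fin n)) 1, ‖x‖ ^ (δ - n)) ≤ c₂ * δ⁻¹ := by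
  have : Nonempty (Fin n) := Fin.pos_iff_nonempty.1 hn
  set v := volume.real (ball (0 : EuclideanSpace ℝ (Fin n)) 1)
  have hv : 0 < v := ENNReal.toReal_pos (measure_ball_pos _ _ one_pos).ne' measure_ball_lt_top.ne
  have hK : n * v / 4 ^ n ≤ n * v := div_le_self (by positivity) (one_le_pow₀ (by norm_num))
  refine ⟨n * v / 4 ^ n, by positivity, n * 2 ^ n + n * v * (4 * √n) ^ n, by positivity,
    fun δ ⟨hδ, hδn⟩ => ?_⟩
  have hA1 := memA1_norm_rpow hn hδ hδn
  have hloc := locallyIntegrable_norm_rpow (volume : Measure (EuclideanSpace ℝ (Fin n))) hδ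
  rw [finrank_euclideanSpace_fin] at hloc
  simp only [← div_eq_mul_inv, integral_norm_rpow_unitBall hn hδ]
  refine ⟨⟨fun x => rpow_nonneg (norm_nonneg x) _, hloc, _, memAp_one_iff.2 hA1⟩,
    le_A1const (by positivity) hA1 fun C hC h => ?_, A1const_le (by positivity) hA1, ?_, ?_⟩
  · simpa [div_div] using le_of_memA1_norm_rpow hn hδ hδn hC h
  · exact div_le_div_of_nonneg_right hK hδ.le
  · gcongr
    have : 1 ≤ 4 * √n := by linarith [one_le_sqrt.2 (show (1 : ℝ) ≤ n by exact_mod_cast hn)]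
    exact le_add_of_nonneg_of_le (by positivity)
      (le_mul_of_one_le_right (by positivity) (one_le_pow₀ this))
end
end

section
/- Let $\omega$ be a nonnegative locally integrable function on $\mathbb{R}$ and $p\in(1,\infty)$. Suppose there exist $s\in(0,1)$, $q\in[1,\infty)$, and $C>0$ such that for every $r>0$ and every $f\in\dot{W}^{1,p}_\omega(\mathbb{R})$, $\left(\int_{\mathbb{R}}\left(\int_{|h|<r}\frac{|f(x+h)-f(x)|^q}{|h|^{1+sq}}\,dh\right)^{p/q}\omega(x)\,dx\right)^{1/p}\le C\,r^{1-s}\,\|f'\|_{L^p_\omega(\mathbb{R})}$. Then $\omega\in A_p$. -/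
open MeasureTheory Real Set
open scoped Classical ENNReal

noncomputable section

open Paper

/-- The one-dimensional `A_p` condition (over bounded open intervals) with constant `C`. -/
def MemApR (p : ℝ) (ω : ℝ → ℝ) (C : ℝ) : Prop :=
  ∀ a b : ℝ, a < b →
    IntegrableOn (fun x => ω x ^ (-1 / (p - 1))) (Set.Ioo a b) volume ∧
    (⨍ x in Set.Ioo a b, ω x) * (⨍ x in Set.Ioo a b, ω x ^ (-1 / (p - 1))) ^ (p - 1) ≤ C


/-!
Fix an interval `I = (a, b)` of length `L` and `ε > 0`, and test the inequality with
`g = 1_I (ω + ε) ^ (-1/(p-1))` and its primitive `f` vanishing to the left of `I`. Since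
`|g| ^ p ω ≤ g`, the right-hand side with `r = 2L` is at most `C (2L) ^ (1 - s) S ^ (1/p)`,
where `S = ∫_I g`. On the other hand `f` is Lipschitz and jumps by `S` across `I`, so for each
`x ∈ I` the difference `|f (x + h) - f x|` is at least `S / 2` on a set of `h ∈ (-2L, 2L)` of
measure `L`; this bounds the left-hand side from below by a multiple of
`S (∫_I ω) ^ (1/p) / L ^ s`. Comparing the two gives `S ^ (p - 1) ∫_I ω ≤ (8 C L) ^ p`
uniformly in `ε`, and Fatou's lemma lets `ε → 0`.
-/

open Filter Topology
open scoped NNReal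

theorem intervalIntegrable_abs_rpow {e : ℝ} (he : -1 < e) (a b : ℝ) :
    IntervalIntegrable (fun x : ℝ => |x| ^ e) volume a b := by
  have hpos : ∀ c, 0 ≤ c → IntervalIntegrable (fun x : ℝ => |x| ^ e) volume 0 c := by
    intro c hc
    refine (intervalIntegral.intervalIntegrable_rpow' he).congr ?_
    rw [uIoc_of_le hc]
    intro x hx
    simp only [abs_of_pos hx.1]
  have h0c : ∀ c, IntervalIntegrable (fun x : ℝ => |x| ^ e) volume 0 c := by
    intro c
    rcases le_total 0 c with hc | hc
    · exact hpos c hc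
    · simpa using (IntervalIntegrable.iff_comp_neg).1 (hpos (-c) (by linarith))
  exact (h0c a).symm.trans (h0c b)

theorem integrableOn_abs_rpow_Ioo {e : ℝ} (he : -1 < e) (r : ℝ) :
    IntegrableOn (fun h : ℝ => |h| ^ e) (Ioo (-r) r) :=
  (intervalIntegrable_iff.1 (intervalIntegrable_abs_rpow he (-r) r)).mono_set
    (Ioo_subset_Ioc_self.trans Ioc_subset_uIoc)

/-- Fatou's lemma. Convergence is only asked where `f ≠ 0`, since it is applied to
`f = ω ^ (-1/(p-1))`, which takes the junk value `0` where `ω = 0`. -/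
theorem integrable_and_integral_le_of_tendsto {α : Type*} [MeasurableSpace α] {μ : Measure α}
    {F : ℕ → α → ℝ} {f : α → ℝ} {B : ℝ} (hF : ∀ n, Integrable (F n) μ)
    (hF0 : ∀ n, 0 ≤ᵐ[μ] F n) (hf : AEStronglyMeasurable f μ) (hf0 : 0 ≤ᵐ[μ] f)
    (hlim : ∀ᵐ x ∂μ, f x ≠ 0 → Tendsto (fun n => F n x) atTop (𝓝 (f x)))
    (hB : ∀ n, ∫ x, F n x ∂μ ≤ B) : Integrable f μ ∧ ∫ x, f x ∂μ ≤ B := by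
  have hlint : ∫⁻ x, ENNReal.ofReal (f x) ∂μ ≤ ENNReal.ofReal B :=
    calc ∫⁻ x, ENNReal.ofReal (f x) ∂μ
        ≤ ∫⁻ x, liminf (fun n => ENNReal.ofReal (F n x)) atTop ∂μ := by
          refine lintegral_mono_ae (hlim.mono fun x hx => ?_)
          rcases eq_or_ne (f x) 0 with h | h
          · simp [h]
          · exact ((ENNReal.continuous_ofReal.tendsto _).comp (hx h)).liminf_eq.ge
      _ ≤ liminf (fun n => ∫⁻ x, ENNReal.ofReal (F n x) ∂μ) atTop :=
          lintegral_liminf_le' fun n => (hF n).aemeasurable.ennreal_ofReal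
      _ ≤ ENNReal.ofReal B := liminf_le_of_frequently_le' (Frequently.of_forall fun n => by
          rw [← ofReal_integral_eq_lintegral_ofReal (hF n) (hF0 n)]
          exact ENNReal.ofReal_le_ofReal (hB n))
  have hint : Integrable f μ :=
    ⟨hf, (hasFiniteIntegral_iff_ofReal hf0).2 (hlint.trans_lt ENNReal.ofReal_lt_top)⟩
  have hB0 : 0 ≤ B := (integral_nonneg_of_ae (hF0 0)).trans (hB 0)
  refine ⟨hint, (ENNReal.ofReal_le_ofReal_iff hB0).1 ?_⟩
  rwa [ofReal_integral_eq_lintegral_ofReal hint hf0]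

section Primitive

variable {g : ℝ → ℝ} {x y a b : ℝ}

def primitiveIic (g : ℝ → ℝ) (x : ℝ) : ℝ := ∫ t in Iic x, g t

theorem primitiveIic_sub (hg : Integrable g) (hxy : x ≤ y) :
    primitiveIic g y - primitiveIic g x = ∫ t in Ioc x y, g t := by
  rw [primitiveIic, primitiveIic, ← Iic_union_Ioc_eq_Iic hxy,
    setIntegral_union (Iic_disjoint_Ioc le_rfl) measurableSet_Ioc hg.integrableOn
      hg.integrableOn, add_sub_cancel_left]

theorem lipschitzWith_primitiveIic {K : ℝ≥0} (hg : Integrable g) (hK : ∀ t, ‖g t‖ ≤ K) :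
    LipschitzWith K (primitiveIic g) := by
  have key : ∀ x y, x ≤ y → dist (primitiveIic g x) (primitiveIic g y) ≤ K * dist x y := by
    intro x y hxy
    rw [dist_comm, Real.dist_eq, primitiveIic_sub hg hxy, ← Real.norm_eq_abs, Real.dist_eq,
      abs_of_nonpos (sub_nonpos.2 hxy), neg_sub, ← Real.volume_real_Ioc_of_le hxy]
    exact norm_setIntegral_le_of_norm_le_const (μ := volume) measure_Ioc_lt_top fun t _ => hK t
  refine LipschitzWith.of_dist_le_mul fun x y => ?_
  rcases le_total x y with hxy | hxy
  · exact key x y hxy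
  · rw [dist_comm, dist_comm x]; exact key y x hxy

theorem integral_primitiveIic_mul_deriv (hg : Integrable g) {φ : ℝ → ℝ}
    (hφ : ContDiff ℝ 1 φ) (hφc : HasCompactSupport φ) :
    ∫ x, primitiveIic g x * deriv φ x = -∫ x, g x * φ x := by
  -- Fubini on `{(t, x) | t ≤ x}`
  set Φ : ℝ × ℝ → ℝ := {z | z.1 ≤ z.2}.indicator fun z => g z.1 * deriv φ z.2
  have hΦ : Integrable Φ (volume.prod volume) :=
    (hg.mul_prod ((hφ.continuous_deriv le_rfl).integrable_of_hasCompactSupport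
      hφc.deriv)).indicator (measurableSet_le measurable_fst measurable_snd)
  have hx : ∀ x, primitiveIic g x * deriv φ x = ∫ t, Φ (t, x) := by
    intro x
    rw [primitiveIic, ← integral_mul_const, ← integral_indicator measurableSet_Iic]
    rfl
  have ht : ∀ t, ∫ x, Φ (t, x) = -(g t * φ t) := by
    intro t
    change ∫ x, (Ici t).indicator (fun x => g t * deriv φ x) x = _
    rw [integral_indicator measurableSet_Ici, integral_const_mul, integral_Ici_eq_integral_Ioi,
      hφc.integral_Ioi_deriv_eq hφ t, mul_neg]
  calc ∫ x, primitiveIic g x * deriv φ x = ∫ x, ∫ t, Φ (t, x) :=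
        integral_congr_ae (ae_of_all _ hx)
    _ = ∫ t, ∫ x, Φ (t, x) := (integral_integral_swap (f := fun t x => Φ (t, x)) hΦ).symm
    _ = -∫ x, g x * φ x := by simp_rw [ht, integral_neg]

theorem primitiveIic_indicator_of_le {σ : ℝ → ℝ} (hx : x ≤ a) :
    primitiveIic ((Ioo a b).indicator σ) x = 0 := by
  have : Iic x ∩ Ioo a b = ∅ :=
    eq_empty_of_forall_notMem fun t ht => (ht.1.trans hx).not_gt ht.2.1
  rw [primitiveIic, setIntegral_indicator measurableSet_Ioo, this, Measure.restrict_empty,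
    integral_zero_measure]

theorem primitiveIic_indicator_of_ge {σ : ℝ → ℝ} (hx : b ≤ x) :
    primitiveIic ((Ioo a b).indicator σ) x = ∫ t in Ioo a b, σ t := by
  rw [primitiveIic, setIntegral_indicator measurableSet_Ioo,
    inter_eq_self_of_subset_right fun t ht => mem_Iic.2 (ht.2.le.trans hx)]

end Primitive

section Gagliardo

variable {f : ℝ → ℝ} {s q r x a b : ℝ} {K : ℝ≥0}

def gagliardoQuotient (f : ℝ → ℝ) (s q x h : ℝ) : ℝ :=
  |f (x + h) - f x| ^ q / |h| ^ (1 + s * q)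

def gagliardoInner (f : ℝ → ℝ) (s q r x : ℝ) : ℝ :=
  ∫ h in Ioo (-r) r, gagliardoQuotient f s q x h

theorem gagliardoQuotient_nonneg (f : ℝ → ℝ) (s q x h : ℝ) :
    0 ≤ gagliardoQuotient f s q x h := by
  unfold gagliardoQuotient; positivity

theorem gagliardoInner_nonneg (f : ℝ → ℝ) (s q r x : ℝ) : 0 ≤ gagliardoInner f s q r x :=
  setIntegral_nonneg measurableSet_Ioo fun h _ => gagliardoQuotient_nonneg f s q x h

theorem Continuous.measurable_gagliardoQuotient (hf : Continuous f) :
    Measurable fun z : ℝ × ℝ => gagliardoQuotient f s q z.1 z.2 := by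
  unfold gagliardoQuotient; fun_prop

theorem gagliardoInner_eq_zero (hq : q ≠ 0) (hf : ∀ h ∈ Ioo (-r) r, f (x + h) = f x) :
    gagliardoInner f s q r x = 0 :=
  setIntegral_eq_zero_of_forall_eq_zero fun h hh => by
    rw [gagliardoQuotient, hf h hh, sub_self, abs_zero, Real.zero_rpow hq, zero_div]

theorem LipschitzWith.gagliardoQuotient_le (hf : LipschitzWith K f) (hq : 0 < q) (x h : ℝ) :
    gagliardoQuotient f s q x h ≤ K ^ q * |h| ^ (q - 1 - s * q) := by
  rcases eq_or_ne h 0 with rfl | hh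
  · rw [gagliardoQuotient, add_zero, sub_self, abs_zero, Real.zero_rpow hq.ne', zero_div]
    positivity
  have hpos : 0 < |h| := abs_pos.2 hh
  have hlip : |f (x + h) - f x| ≤ K * |h| := by
    simpa [Real.dist_eq] using hf.dist_le_mul (x + h) x
  calc gagliardoQuotient f s q x h ≤ (K * |h|) ^ q / |h| ^ (1 + s * q) := by
        unfold gagliardoQuotient; gcongr
    _ = K ^ q * |h| ^ (q - 1 - s * q) := by
        rw [Real.mul_rpow K.coe_nonneg hpos.le, mul_div_assoc, ← Real.rpow_sub hpos]; ring_nf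

theorem LipschitzWith.integrableOn_gagliardoQuotient (hf : LipschitzWith K f) (hq : 0 < q)
    (hs : s < 1) (x r : ℝ) : IntegrableOn (gagliardoQuotient f s q x) (Ioo (-r) r) := by
  have he : -1 < q - 1 - s * q := by nlinarith [mul_pos hq (sub_pos.2 hs)]
  refine ((integrableOn_abs_rpow_Ioo he r).const_mul ((K : ℝ) ^ q)).mono'
    ?_ (ae_of_all _ fun h => ?_)
  · exact (hf.continuous.measurable_gagliardoQuotient.comp
      (measurable_const.prodMk measurable_id)).aestronglyMeasurable
  · rw [Real.norm_of_nonneg (gagliardoQuotient_nonneg f s q x h)]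
    exact hf.gagliardoQuotient_le hq x h

theorem LipschitzWith.gagliardoInner_le (hf : LipschitzWith K f) (hq : 0 < q) (hs : s < 1)
    (x r : ℝ) :
    gagliardoInner f s q r x ≤ K ^ q * ∫ h in Ioo (-r) r, |h| ^ (q - 1 - s * q) := by
  have he : -1 < q - 1 - s * q := by nlinarith [mul_pos hq (sub_pos.2 hs)]
  rw [← integral_const_mul]
  exact setIntegral_mono_on (hf.integrableOn_gagliardoQuotient hq hs x r)
    ((integrableOn_abs_rpow_Ioo he r).const_mul _) measurableSet_Ioo
    fun h _ => hf.gagliardoQuotient_le hq x h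

/-- By the triangle inequality `f x` is at distance at least `|f b - f a| / 2` from `f a` or from
`f b`, which are the values of `f (x + h)` for `h` in `(-2L, -L)`, resp. `(L, 2L)`, `L = b - a`. -/
theorem le_gagliardoInner (hx : x ∈ Ioo a b) (hq : 0 ≤ q) (hsq : 0 ≤ 1 + s * q)
    (hleft : ∀ y ≤ a, f y = f a) (hright : ∀ y, b ≤ y → f y = f b)
    (hint : IntegrableOn (gagliardoQuotient f s q x) (Ioo (-(2 * (b - a))) (2 * (b - a)))) :
    (|f b - f a| / 2) ^ q / (2 * (b - a)) ^ (1 + s * q) * (b - a) ≤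
      gagliardoInner f s q (2 * (b - a)) x := by
  obtain ⟨hxa, hxb⟩ := hx
  set c := (|f b - f a| / 2) ^ q / (2 * (b - a)) ^ (1 + s * q)
  have hJ : ∀ J ⊆ Ioo (-(2 * (b - a))) (2 * (b - a)), MeasurableSet J →
      volume.real J = b - a → (∀ h ∈ J, c ≤ gagliardoQuotient f s q x h) →
      c * (b - a) ≤ gagliardoInner f s q (2 * (b - a)) x := by
    intro J hJ hJm hvol hc
    calc c * (b - a) = c * volume.real J := by rw [hvol]
      _ ≤ ∫ h in J, gagliardoQuotient f s q x h := setIntegral_ge_of_const_le_real hJm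
          (measure_ne_top_of_subset hJ measure_Ioo_lt_top.ne) hc (hint.mono_set hJ)
      _ ≤ _ := setIntegral_mono_set hint (ae_of_all _ (gagliardoQuotient_nonneg f s q x))
          hJ.eventuallyLE
  have hquot : ∀ h, 0 < |h| → |h| ≤ 2 * (b - a) → |f b - f a| / 2 ≤ |f (x + h) - f x| →
      c ≤ gagliardoQuotient f s q x h := fun h h0 hR hv => by
    unfold gagliardoQuotient
    exact div_le_div₀ (by positivity) (Real.rpow_le_rpow (by positivity) hv hq) (by positivity)
      (Real.rpow_le_rpow h0.le hR hsq)
  by_cases hcase : |f b - f a| / 2 ≤ |f b - f x|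
  · refine hJ (Ioo (b - a) (2 * (b - a))) (Ioo_subset_Ioo (by linarith) le_rfl)
      measurableSet_Ioo (by rw [Real.volume_real_Ioo_of_le (by linarith)]; ring) fun h hh => ?_
    refine hquot h (by rw [abs_of_pos (by linarith [hh.1])]; linarith [hh.1])
      (by rw [abs_of_pos (by linarith [hh.1])]; exact hh.2.le) ?_
    rwa [hright (x + h) (by linarith [hh.1])]
  · refine hJ (Ioo (-(2 * (b - a))) (-(b - a))) (Ioo_subset_Ioo le_rfl (by linarith))
      measurableSet_Ioo (by rw [Real.volume_real_Ioo_of_le (by linarith)]; ring) fun h hh => ?_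
    refine hquot h (by rw [abs_of_neg (by linarith [hh.2])]; linarith [hh.2])
      (by rw [abs_of_neg (by linarith [hh.2])]; linarith [hh.1]) ?_
    rw [hleft (x + h) (by linarith [hh.2]), abs_sub_comm (f a)]
    linarith [abs_sub_le (f b) (f x) (f a)]

theorem LipschitzWith.integrable_gagliardoInner_rpow_mul (hf : LipschitzWith K f) (hq : 0 < q)
    (hs : s < 1) {t : ℝ} (ht : 0 < t) {ω : ℝ → ℝ} (h0 : ∀ x, 0 ≤ ω x)
    (hω : LocallyIntegrable ω) (hleft : ∀ y ≤ a, f y = f a)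
    (hright : ∀ y, b ≤ y → f y = f b) (r : ℝ) :
    Integrable fun x => gagliardoInner f s q r x ^ t * ω x := by
  set M := (K : ℝ) ^ q * ∫ h in Ioo (-r) r, |h| ^ (q - 1 - s * q)
  have hmeas : AEStronglyMeasurable fun x => gagliardoInner f s q r x ^ t * ω x := by
    have := (hf.continuous.measurable_gagliardoQuotient (s := s) (q := q)).stronglyMeasurable
      |>.integral_prod_right' (ν := volume.restrict (Ioo (-r) r))
    exact ((this.measurable.pow_const t).aemeasurable.mul
      hω.aestronglyMeasurable.aemeasurable).aestronglyMeasurable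
  refine ((integrable_indicator_iff measurableSet_Icc).2 ((hω.integrableOn_isCompact
    (isCompact_Icc (a := a - r) (b := b + r))).const_mul (M ^ t))).mono' hmeas
    (ae_of_all _ fun x => ?_)
  rw [Real.norm_of_nonneg (mul_nonneg (Real.rpow_nonneg (gagliardoInner_nonneg f s q r x) t)
    (h0 x))]
  by_cases hx : x ∈ Icc (a - r) (b + r)
  · rw [indicator_of_mem hx]
    gcongr
    · exact h0 x
    · exact gagliardoInner_nonneg f s q r x
    · exact hf.gagliardoInner_le hq hs x r
  · have hconst : ∀ h ∈ Ioo (-r) r, f (x + h) = f x := by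
      intro h hh
      rcases not_and_or.1 hx with hxa | hxb
      · rw [hleft x (by linarith [hh.1, hh.2]), hleft (x + h) (by linarith [hh.2])]
      · rw [hright x (by linarith [hh.1, hh.2]), hright (x + h) (by linarith [hh.1])]
    rw [indicator_of_notMem hx, gagliardoInner_eq_zero hq.ne' hconst, Real.zero_rpow ht.ne',
      zero_mul]

theorem LipschitzWith.le_integral_gagliardoInner_rpow_mul (hf : LipschitzWith K f)
    (hq : 0 < q) (hs0 : 0 ≤ s) (hs : s < 1) {t : ℝ} (ht : 0 < t) {ω : ℝ → ℝ}
    (h0 : ∀ x, 0 ≤ ω x) (hω : LocallyIntegrable ω) (hleft : ∀ y ≤ a, f y = f a)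
    (hright : ∀ y, b ≤ y → f y = f b) :
    ((|f b - f a| / 2) ^ q / (2 * (b - a)) ^ (1 + s * q) * (b - a)) ^ t * ∫ x in Ioo a b, ω x ≤
      ∫ x, gagliardoInner f s q (2 * (b - a)) x ^ t * ω x := by
  have hint := hf.integrable_gagliardoInner_rpow_mul hq hs ht h0 hω hleft hright (2 * (b - a))
  rw [← integral_const_mul]
  refine (setIntegral_mono_on (((hω.integrableOn_isCompact isCompact_Icc).mono_set
    Ioo_subset_Icc_self).const_mul _) hint.integrableOn measurableSet_Ioo fun x hx => ?_).trans
    (setIntegral_le_integral hint (ae_of_all _ fun x => ?_))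
  · have hba : 0 < b - a := by linarith [hx.1, hx.2]
    gcongr
    · exact h0 x
    · exact le_gagliardoInner hx hq.le (by positivity) hleft hright
        (hf.integrableOn_gagliardoQuotient hq hs x _)
  · have := gagliardoInner_nonneg f s q (2 * (b - a)) x
    have := h0 x
    positivity

end Gagliardo

section DualWeight

variable {ω : ℝ → ℝ} {p ε a b : ℝ}

theorem rpow_neg_inv_sub_one_rpow_mul_le {u w : ℝ} (hp : 1 < p) (hu : 0 < u) (hwu : w ≤ u) :
    (u ^ (-1 / (p - 1))) ^ p * w ≤ u ^ (-1 / (p - 1)) := by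
  have hpow : (u ^ (-1 / (p - 1))) ^ p = u ^ (-1 / (p - 1)) * u⁻¹ := by
    rw [← Real.rpow_mul hu.le, ← Real.rpow_neg_one, ← Real.rpow_add hu]
    congr 1
    field_simp [(by linarith : p - 1 ≠ 0)]
    ring
  rw [hpow, mul_assoc]
  exact mul_le_of_le_one_right (by positivity) ((inv_mul_le_one₀ hu).2 hwu)

def regDualWeight (ω : ℝ → ℝ) (p ε x : ℝ) : ℝ := (ω x + ε) ^ (-1 / (p - 1))

theorem regDualWeight_nonneg (h0 : ∀ x, 0 ≤ ω x) (hε : 0 ≤ ε) (x : ℝ) :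
    0 ≤ regDualWeight ω p ε x :=
  Real.rpow_nonneg (by linarith [h0 x]) _

theorem regDualWeight_le (hp : 1 < p) (h0 : ∀ x, 0 ≤ ω x) (hε : 0 < ε) (x : ℝ) :
    regDualWeight ω p ε x ≤ ε ^ (-1 / (p - 1)) :=
  Real.rpow_le_rpow_of_nonpos hε (by linarith [h0 x])
    (div_nonpos_of_nonpos_of_nonneg (by norm_num) (by linarith))

theorem AEMeasurable.regDualWeight (hω : AEMeasurable ω) :
    AEMeasurable (regDualWeight ω p ε) := by
  unfold _root_.regDualWeight; fun_prop

theorem tendsto_regDualWeight {x : ℝ} (hx : ω x ≠ 0) :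
    Tendsto (fun n : ℕ => regDualWeight ω p (1 / (n + 1)) x) atTop
      (𝓝 (ω x ^ (-1 / (p - 1)))) := by
  have : Tendsto (fun n : ℕ => ω x + 1 / ((n : ℝ) + 1)) atTop (𝓝 (ω x)) := by
    simpa using tendsto_one_div_add_atTop_nhds_zero_nat.const_add (ω x)
  exact (Real.continuousAt_rpow_const _ _ (Or.inl hx)).tendsto.comp this

theorem integrable_indicator_regDualWeight (hp : 1 < p) (h0 : ∀ x, 0 ≤ ω x) (hε : 0 < ε)
    (hω : AEMeasurable ω) : Integrable ((Ioo a b).indicator (regDualWeight ω p ε)) := by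
  refine (integrable_indicator_iff measurableSet_Ioo).2 (Measure.integrableOn_of_bounded
    (M := ε ^ (-1 / (p - 1))) (by simp) hω.regDualWeight.aestronglyMeasurable
    (ae_of_all _ fun x => ?_))
  rw [Real.norm_of_nonneg (regDualWeight_nonneg h0 hε.le x)]
  exact regDualWeight_le hp h0 hε x

theorem abs_indicator_regDualWeight_rpow_mul_le (hp : 1 < p) (h0 : ∀ x, 0 ≤ ω x)
    (hε : 0 < ε) (x : ℝ) : |(Ioo a b).indicator (regDualWeight ω p ε) x| ^ p * ω x ≤
      (Ioo a b).indicator (regDualWeight ω p ε) x := by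
  by_cases hx : x ∈ Ioo a b
  · rw [indicator_of_mem hx, abs_of_nonneg (regDualWeight_nonneg h0 hε.le x)]
    exact rpow_neg_inv_sub_one_rpow_mul_le hp (by linarith [h0 x]) (by linarith)
  · rw [indicator_of_notMem hx, abs_zero, Real.zero_rpow (by linarith), zero_mul]

theorem integrable_abs_indicator_regDualWeight_rpow_mul (hp : 1 < p) (h0 : ∀ x, 0 ≤ ω x)
    (hε : 0 < ε) (hω : AEMeasurable ω) :
    Integrable fun x => |(Ioo a b).indicator (regDualWeight ω p ε) x| ^ p * ω x := by
  have hg := integrable_indicator_regDualWeight (a := a) (b := b) hp h0 hε hω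
  refine hg.mono' ?_ (ae_of_all _ fun x => ?_)
  · exact (hg.aemeasurable.abs.pow_const p |>.mul hω).aestronglyMeasurable
  · rw [Real.norm_of_nonneg (by have := h0 x; positivity)]
    exact abs_indicator_regDualWeight_rpow_mul_le hp h0 hε x

theorem integral_abs_indicator_regDualWeight_rpow_mul_le (hp : 1 < p) (h0 : ∀ x, 0 ≤ ω x)
    (hε : 0 < ε) (hω : AEMeasurable ω) :
    ∫ x, |(Ioo a b).indicator (regDualWeight ω p ε) x| ^ p * ω x ≤
      ∫ x in Ioo a b, regDualWeight ω p ε x := by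
  rw [← integral_indicator measurableSet_Ioo]
  exact integral_mono (integrable_abs_indicator_regDualWeight_rpow_mul hp h0 hε hω)
    (integrable_indicator_regDualWeight hp h0 hε hω)
    (abs_indicator_regDualWeight_rpow_mul_le hp h0 hε)

theorem lipschitzWith_primitiveIic_indicator_regDualWeight (hp : 1 < p) (h0 : ∀ x, 0 ≤ ω x)
    (hε : 0 < ε) (hω : AEMeasurable ω) :
    LipschitzWith (ε ^ (-1 / (p - 1))).toNNReal
      (primitiveIic ((Ioo a b).indicator (regDualWeight ω p ε))) := by
  refine lipschitzWith_primitiveIic (integrable_indicator_regDualWeight hp h0 hε hω) fun x => ?_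
  rw [Real.coe_toNNReal _ (by positivity), Real.norm_of_nonneg
    (indicator_nonneg (fun y _ => regDualWeight_nonneg h0 hε.le y) x)]
  exact (indicator_le_self' fun y _ => regDualWeight_nonneg h0 hε.le y) x |>.trans
    (regDualWeight_le hp h0 hε x)

end DualWeight

/-- After taking logarithms the `s`-dependence cancels, and `p / q ≤ p` absorbs the rest. -/
theorem rpow_sub_one_mul_le_of_gagliardo_scaling {p q s S L A C : ℝ} (hp : 1 < p) (hq : 1 ≤ q)
    (hS : 0 ≤ S) (hL : 0 < L) (hA : 0 ≤ A) (hC : 0 < C)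
    (h : ((S / 2) ^ q / (2 * L) ^ (1 + s * q) * L) ^ (p / q) * A ≤
      (C * (2 * L) ^ (1 - s)) ^ p * S) :
    S ^ (p - 1) * A ≤ (8 * C) ^ p * L ^ p := by
  rcases hS.eq_or_lt with rfl | hS
  · rw [Real.zero_rpow (by linarith), zero_mul]; positivity
  rcases hA.eq_or_lt with rfl | hA
  · rw [mul_zero]; positivity
  have hq0 : 0 < q := by linarith
  have hlog := Real.log_le_log (by positivity) h
  rw [show (8 : ℝ) = 2 ^ (3 : ℝ) by norm_num]
  refine (Real.log_le_log_iff (by positivity) (by positivity)).1 ?_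
  simp (disch := positivity) only [Real.log_mul, Real.log_div, Real.log_rpow] at hlog ⊢
  have expand : p / q * (q * (Real.log S - Real.log 2) - (1 + s * q) * (Real.log 2 + Real.log L)
      + Real.log L) = p * Real.log S - p * Real.log 2 - p / q * Real.log 2
        - s * p * Real.log 2 - s * p * Real.log L := by
    field_simp
    ring
  have hpq : p / q * Real.log 2 ≤ p * Real.log 2 :=
    mul_le_mul_of_nonneg_right (div_le_self (by linarith) hq) (Real.log_nonneg one_le_two)
  rw [expand] at hlog
  linarith

section Regularized

variable {ω : ℝ → ℝ} {p a b : ℝ}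

theorem integral_regDualWeight_rpow_sub_one_mul_le {ε s q C : ℝ} (hp : 1 < p) (hε : 0 < ε)
    (h0 : ∀ x, 0 ≤ ω x) (hω : LocallyIntegrable ω) (hab : a < b) (hs0 : 0 ≤ s)
    (hs1 : s < 1) (hq : 1 ≤ q) (hC : 0 < C)
    (hH : (∫ x, gagliardoInner (primitiveIic ((Ioo a b).indicator (regDualWeight ω p ε))) s q
        (2 * (b - a)) x ^ (p / q) * ω x) ^ (1 / p) ≤
      C * (2 * (b - a)) ^ (1 - s) *
        (∫ x, |(Ioo a b).indicator (regDualWeight ω p ε) x| ^ p * ω x) ^ (1 / p)) :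
    (∫ x in Ioo a b, regDualWeight ω p ε x) ^ (p - 1) * ∫ x in Ioo a b, ω x ≤
      (8 * C) ^ p * (b - a) ^ p := by
  set S := ∫ x in Ioo a b, regDualWeight ω p ε x
  have hS : 0 ≤ S :=
    setIntegral_nonneg measurableSet_Ioo fun x _ => regDualWeight_nonneg h0 hε.le x
  have hA : 0 ≤ ∫ x in Ioo a b, ω x := setIntegral_nonneg measurableSet_Ioo fun x _ => h0 x
  have hωm := hω.aestronglyMeasurable.aemeasurable
  have hlow := (lipschitzWith_primitiveIic_indicator_regDualWeight (a := a) (b := b) hp h0 hε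
    hωm).le_integral_gagliardoInner_rpow_mul (by linarith : (0 : ℝ) < q) hs0 hs1
      (t := p / q) (by positivity) h0 hω
      (fun y hy => (primitiveIic_indicator_of_le hy).trans
        (primitiveIic_indicator_of_le le_rfl).symm)
      (fun y hy => (primitiveIic_indicator_of_ge hy).trans
        (primitiveIic_indicator_of_ge le_rfl).symm)
  rw [primitiveIic_indicator_of_ge le_rfl, primitiveIic_indicator_of_le le_rfl, sub_zero,
    abs_of_nonneg hS] at hlow
  refine rpow_sub_one_mul_le_of_gagliardo_scaling (s := s) hp hq hS (by linarith) hA hC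
    ((Real.rpow_le_rpow_iff (by positivity) (by positivity) (by positivity : 0 < 1 / p)).1 ?_)
  calc _ ≤ _ := Real.rpow_le_rpow (by positivity) hlow (by positivity)
    _ ≤ _ := hH
    _ ≤ C * (2 * (b - a)) ^ (1 - s) * S ^ (1 / p) := by
        gcongr
        · exact integral_nonneg fun x => by have := h0 x; positivity
        · exact integral_abs_indicator_regDualWeight_rpow_mul_le hp h0 hε hωm
    _ = ((C * (2 * (b - a)) ^ (1 - s)) ^ p * S) ^ (1 / p) := by
        rw [Real.mul_rpow (by positivity) hS, ← Real.rpow_mul (by positivity),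
          mul_one_div_cancel (by linarith), Real.rpow_one]

theorem integrableOn_and_integral_rpow_le_of_regularized {M : ℝ} (hp : 1 < p)
    (h0 : ∀ x, 0 ≤ ω x) (hω : LocallyIntegrable ω)
    (hreg : ∀ ε, 0 < ε →
      (∫ x in Ioo a b, regDualWeight ω p ε x) ^ (p - 1) * ∫ x in Ioo a b, ω x ≤ M) :
    IntegrableOn (fun x => ω x ^ (-1 / (p - 1))) (Ioo a b) ∧
      (∫ x in Ioo a b, ω x ^ (-1 / (p - 1))) ^ (p - 1) * ∫ x in Ioo a b, ω x ≤ M := by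
  have hp1 : 0 < p - 1 := by linarith
  have he : -1 / (p - 1) ≠ 0 := div_ne_zero (by norm_num) hp1.ne'
  have hS : ∀ ε, 0 < ε → 0 ≤ ∫ x in Ioo a b, regDualWeight ω p ε x := fun ε hε =>
    setIntegral_nonneg measurableSet_Ioo fun x _ => regDualWeight_nonneg h0 hε.le x
  have hA : 0 ≤ ∫ x in Ioo a b, ω x := setIntegral_nonneg measurableSet_Ioo fun x _ => h0 x
  have hM : 0 ≤ M := le_trans (by have := hS 1 one_pos; positivity) (hreg 1 one_pos)
  rcases hA.eq_or_lt with hA | hA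
  · -- `ω = 0` a.e. on `(a, b)`, hence so is `ω ^ (-1 / (p - 1))`: `0 ^ x = 0` for `x ≠ 0`
    have hω0 : ω =ᵐ[volume.restrict (Ioo a b)] 0 := (integral_eq_zero_iff_of_nonneg h0
      (hω.integrableOn_isCompact isCompact_Icc |>.mono_set Ioo_subset_Icc_self)).1 hA.symm
    have hσ0 : (fun x => ω x ^ (-1 / (p - 1))) =ᵐ[volume.restrict (Ioo a b)] 0 := by
      filter_upwards [hω0] with x hx
      rw [hx, Pi.zero_apply, Real.zero_rpow he]
    exact ⟨(integrable_zero _ _ _).congr hσ0.symm, by rw [← hA, mul_zero]; exact hM⟩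
  have hωm := hω.aestronglyMeasurable.aemeasurable
  obtain ⟨hint, hle⟩ := integrable_and_integral_le_of_tendsto
    (F := fun n : ℕ => regDualWeight ω p (1 / (n + 1)))
    (B := (M / ∫ x in Ioo a b, ω x) ^ (p - 1)⁻¹)
    (fun n => (integrable_indicator_iff measurableSet_Ioo).1
      (integrable_indicator_regDualWeight hp h0 (by positivity) hωm))
    (fun n => ae_of_all _ (regDualWeight_nonneg h0 (by positivity)))
    (hωm.pow_const _).aestronglyMeasurable.restrict
    (ae_of_all _ fun x => Real.rpow_nonneg (h0 x) _)
    (ae_of_all _ fun x hx => tendsto_regDualWeight fun h =>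
      hx ((Real.rpow_eq_zero_iff_of_nonneg (h0 x)).2 ⟨h, he⟩))
    (fun n => (Real.le_rpow_inv_iff_of_pos (hS _ (by positivity)) (by positivity) hp1).2
      ((le_div_iff₀ hA).2 (hreg _ (by positivity))))
  refine ⟨hint, (le_div_iff₀ hA).1 ?_⟩
  exact (Real.le_rpow_inv_iff_of_pos (setIntegral_nonneg measurableSet_Ioo fun x _ =>
    Real.rpow_nonneg (h0 x) _) (by positivity) hp1).1 hle

end Regularized

theorem setAverage_mul_rpow_setAverage_le {u v : ℝ → ℝ} {p a b K : ℝ} (hab : a < b)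
    (hv : 0 ≤ ∫ x in Ioo a b, v x)
    (h : (∫ x in Ioo a b, v x) ^ (p - 1) * ∫ x in Ioo a b, u x ≤ K * (b - a) ^ p) :
    (⨍ x in Ioo a b, u x) * (⨍ x in Ioo a b, v x) ^ (p - 1) ≤ K := by
  have hL : 0 < b - a := sub_pos.2 hab
  rw [setAverage_eq, setAverage_eq, smul_eq_mul, smul_eq_mul, Real.volume_real_Ioo_of_le hab.le]
  calc (b - a)⁻¹ * (∫ x in Ioo a b, u x) * ((b - a)⁻¹ * ∫ x in Ioo a b, v x) ^ (p - 1)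
      = (∫ x in Ioo a b, v x) ^ (p - 1) * (∫ x in Ioo a b, u x) / (b - a) ^ p := by
        rw [Real.mul_rpow (inv_nonneg.2 hL.le) hv, Real.inv_rpow hL.le, Real.rpow_sub_one hL.ne']
        field_simp
    _ ≤ K * (b - a) ^ p / (b - a) ^ p := div_le_div_of_nonneg_right h (by positivity)
    _ = K := by field_simp

/-- Theorem 1.2, necessity, one-dimensional case: the localized Gagliardo seminorm
inequality characterizes `A_p` weights. -/
theorem statement19 (p : ℝ) (hp : 1 < p) (ω : ℝ → ℝ) (h0 : ∀ x, 0 ≤ ω x)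
    (hloc : LocallyIntegrable ω volume) (s q C : ℝ) (hs : s ∈ Set.Ioo (0 : ℝ) 1)
    (hq : 1 ≤ q) (hC : 0 < C)
    (H : ∀ r : ℝ, 0 < r → ∀ f g : ℝ → ℝ,
      LocallyIntegrable f volume → AEStronglyMeasurable g volume →
      Integrable (fun x => |g x| ^ p * ω x) →
      (∀ φ : ℝ → ℝ, ContDiff ℝ (⊤ : ℕ∞) φ → HasCompactSupport φ →
        ∫ x, f x * deriv φ x = -∫ x, g x * φ x) →
      (∫ x, (∫ h in Set.Ioo (-r) r,
          |f (x + h) - f x| ^ q / |h| ^ (1 + s * q)) ^ (p / q) * ω x) ^ (1 / p) ≤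
        C * r ^ (1 - s) * (∫ x, |g x| ^ p * ω x) ^ (1 / p)) :
    ∃ C' : ℝ, MemApR p ω C' := by
  obtain ⟨hs0, hs1⟩ := hs
  have hωm := hloc.aestronglyMeasurable.aemeasurable
  refine ⟨(8 * C) ^ p, fun a b hab => ?_⟩
  obtain ⟨hint, hbound⟩ := integrableOn_and_integral_rpow_le_of_regularized hp h0 hloc
    (M := (8 * C) ^ p * (b - a) ^ p) fun ε hε => by
      have hg := integrable_indicator_regDualWeight (a := a) (b := b) hp h0 hε hωm
      have hf := (lipschitzWith_primitiveIic_indicator_regDualWeight (a := a) (b := b) hp h0 hε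
        hωm).continuous.locallyIntegrable (μ := volume)
      exact integral_regDualWeight_rpow_sub_one_mul_le hp hε h0 hloc hab hs0.le hs1 hq hC
        (H (2 * (b - a)) (by linarith) _ _ hf hg.aestronglyMeasurable
          (integrable_abs_indicator_regDualWeight_rpow_mul hp h0 hε hωm)
          fun φ hφ hφc => integral_primitiveIic_mul_deriv hg
            (hφ.of_le (by exact_mod_cast le_top)) hφc)
  exact ⟨hint, setAverage_mul_rpow_setAverage_le hab
    (setIntegral_nonneg measurableSet_Ioo fun x _ => Real.rpow_nonneg (h0 x) _) hbound⟩

end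
end
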